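/- arXiv:2110.12805 — 6 statements merged into one kernel-verified Lean document; each statement's English description precedes it below -/
import Mathlib

section
/- Let N be a positive integer, let p and q be probability densities on a measurable space (with respect to a common Borel or counting reference measure), let Z_1, ..., Z_N be i.i.d. random variables with density p, and let G_1, ..., G_N be i.i.d. standard Gumbel random variables (location 0, scale 1) independent of (Z_1,...,Z_N). Define N* = argmax_{n ≤ N} (log q(Z_n) − log p(Z_n) + G_n). Let G̃_1 ≥ G̃_2 ≥ ... ≥ G̃_N be the decreasing rearrangement of G_1,...,G_N and define Ñ* = argmax_{n ≤ N} (log q(Z_n) − log p(Z_n) + G̃_n). Then the random variables Z_{N*} and Z_{Ñ*} have the same distribution. -/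
open MeasureTheory ProbabilityTheory ENNReal

/-- The standard Gumbel distribution (location 0, scale 1), with CDF `exp(-exp(-g))`
and density `exp(-g - exp(-g))` with respect to Lebesgue measure. -/
noncomputable def gumbelMeasure : Measure ℝ :=
  volume.withDensity fun g => ENNReal.ofReal (Real.exp (-g - Real.exp (-g)))

/-- `k` is the argmax of `f` over `Fin N`, with ties broken by the smallest index. -/
def argmaxAt {N : ℕ} (f : Fin N → ℝ) (k : Fin N) : Prop :=
  (∀ m, f m ≤ f k) ∧ ∀ m, f m = f k → k ≤ m

namespace GumbelAux

open Function Set Equiv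

variable {N : ℕ}

lemma gumbel_singleton (x : ℝ) : gumbelMeasure {x} = 0 := by
  rw [gumbelMeasure, withDensity_apply _ (measurableSet_singleton x),
    Measure.restrict_eq_zero.2 (Real.volume_singleton), lintegral_zero_measure]

noncomputable def amax (hN : 0 < N) (f : Fin N → ℝ) : Fin N :=
  (Finset.univ.filter fun k => ∀ m, f m ≤ f k).min' (by
    obtain ⟨b, _, hb⟩ := Finset.exists_max_image Finset.univ f ⟨⟨0, hN⟩, Finset.mem_univ _⟩
    exact ⟨b, Finset.mem_filter.2 ⟨Finset.mem_univ _, fun m => hb m (Finset.mem_univ _)⟩⟩)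

lemma argmaxAt_amax (hN : 0 < N) (f : Fin N → ℝ) : argmaxAt f (amax hN f) := by
  have hmem := Finset.min'_mem (Finset.univ.filter fun k => ∀ m, f m ≤ f k) (by
    obtain ⟨b, _, hb⟩ := Finset.exists_max_image Finset.univ f ⟨⟨0, hN⟩, Finset.mem_univ _⟩
    exact ⟨b, Finset.mem_filter.2 ⟨Finset.mem_univ _, fun m => hb m (Finset.mem_univ _)⟩⟩)
  have hmax : ∀ m, f m ≤ f (amax hN f) := (Finset.mem_filter.1 hmem).2
  refine ⟨hmax, fun m hm => ?_⟩
  exact Finset.min'_le _ m (Finset.mem_filter.2 ⟨Finset.mem_univ _, fun m' => hm ▸ hmax m'⟩)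

lemma amax_eq (hN : 0 < N) {f : Fin N → ℝ} {k : Fin N} (h : argmaxAt f k) :
    amax hN f = k := by
  have h1 := argmaxAt_amax hN f
  have hfk : f k = f (amax hN f) := le_antisymm (h1.1 k) (h.1 _)
  exact le_antisymm (h1.2 k hfk) (h.2 _ hfk.symm)

lemma amax_eq_iff (hN : 0 < N) {f : Fin N → ℝ} {k : Fin N} :
    amax hN f = k ↔ argmaxAt f k :=
  ⟨fun h => h ▸ argmaxAt_amax hN f, amax_eq hN⟩

lemma le_apply_of_strictMono (m : Equiv.Perm (Fin N)) (h : StrictMono m) (i : Fin N) :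
    i ≤ m i := by
  have hcard : (Finset.Iic i).card ≤ (Finset.Iic (m i)).card := by
    refine Finset.card_le_card_of_injOn m (fun j hj => ?_) (m.injective.injOn)
    exact Finset.mem_Iic.2 (h.le_iff_le.2 (Finset.mem_Iic.1 hj))
  rw [Fin.card_Iic, Fin.card_Iic] at hcard
  exact Fin.mk_le_of_le_val (Nat.succ_le_succ_iff.1 hcard)

lemma strictMono_perm_apply (m : Equiv.Perm (Fin N)) (h : StrictMono m) (i : Fin N) :
    m i = i := by
  have hinv : StrictMono (m⁻¹ : Equiv.Perm (Fin N)) := by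
    intro a b hab
    have := h.lt_iff_lt (a := (m⁻¹ : Equiv.Perm (Fin N)) a) (b := (m⁻¹ : Equiv.Perm (Fin N)) b)
    simp only [Equiv.Perm.coe_inv, Equiv.apply_symm_apply] at this
    exact this.1 hab
  refine le_antisymm ?_ (le_apply_of_strictMono m h i)
  have := le_apply_of_strictMono m⁻¹ hinv (m i)
  simpa using this

lemma antitone_perm_unique {g : Fin N → ℝ} (hg : Injective g) {π σ : Equiv.Perm (Fin N)}
    (hπ : Antitone (g ∘ π)) (hσ : Antitone (g ∘ σ)) : π = σ := by
  have hπs : StrictAnti (g ∘ π) := hπ.strictAnti_of_injective (hg.comp π.injective)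
  have hσs : StrictAnti (g ∘ σ) := hσ.strictAnti_of_injective (hg.comp σ.injective)
  have hm : StrictMono (π.trans σ.symm) := by
    intro i j hij
    have h1 : (g ∘ π) j < (g ∘ π) i := hπs hij
    have h2 : (g ∘ σ) ((π.trans σ.symm) j) < (g ∘ σ) ((π.trans σ.symm) i) := by
      simpa [Function.comp, Equiv.trans_apply] using h1
    exact hσs.lt_iff_gt.1 h2
  refine Equiv.ext fun i => ?_
  have := strictMono_perm_apply (π.trans σ.symm) hm i
  have h2 : σ.symm (π i) = i := this
  calc π i = σ (σ.symm (π i)) := (σ.apply_symm_apply _).symm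
    _ = σ i := by rw [h2]

noncomputable def sortPerm (g : Fin N → ℝ) : Equiv.Perm (Fin N) :=
  Tuple.sort (fun n => -g n)

lemma antitone_sortPerm (g : Fin N → ℝ) : Antitone (g ∘ sortPerm g) := by
  intro i j hij
  have := Tuple.monotone_sort (fun n => -g n) hij
  simpa [sortPerm] using this

lemma measurableSet_sortPerm (τ : Equiv.Perm (Fin N)) :
    MeasurableSet {g : Fin N → ℝ | sortPerm g = τ} := by
  have hset : {g : Fin N → ℝ | sortPerm g = τ} =
      ⋂ (i : Fin N) (j : Fin N),
        ({g : Fin N → ℝ | i ≤ j → -g (τ i) ≤ -g (τ j)} ∩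
          {g : Fin N → ℝ | i < j → (-g (τ i) = -g (τ j) → τ i < τ j)}) := by
    ext g
    rw [mem_setOf_eq, show (sortPerm g = τ) ↔ (τ = Tuple.sort (fun n => -g n)) from eq_comm,
      Tuple.eq_sort_iff]
    simp only [mem_iInter, mem_inter_iff, mem_setOf_eq]
    constructor
    · rintro ⟨h1, h2⟩ i j
      exact ⟨fun hij => h1 hij, fun hij => h2 i j hij⟩
    · intro h
      exact ⟨fun i j hij => (h i j).1 hij, fun i j hij => (h i j).2 hij⟩
  rw [hset]
  refine MeasurableSet.iInter fun i => MeasurableSet.iInter fun j => MeasurableSet.inter ?_ ?_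
  · by_cases hij : i ≤ j
    · simp only [hij, true_implies]
      exact measurableSet_le ((measurable_pi_apply (τ i)).neg) ((measurable_pi_apply (τ j)).neg)
    · simp only [hij, false_implies, setOf_true]
      exact MeasurableSet.univ
  · by_cases hij : i < j
    · simp only [hij, true_implies]
      by_cases hτ : τ i < τ j
      · simp only [hτ, implies_true, setOf_true]
        exact MeasurableSet.univ
      · have : {g : Fin N → ℝ | -g (τ i) = -g (τ j) → τ i < τ j} =
            {g : Fin N → ℝ | -g (τ i) = -g (τ j)}ᶜ := by
          ext g; simp [hτ]
        rw [this]
        exact (measurableSet_eq_fun ((measurable_pi_apply (τ i)).neg)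
          ((measurable_pi_apply (τ j)).neg)).compl
    · simp only [hij, false_implies, setOf_true]
      exact MeasurableSet.univ

end GumbelAux
namespace GumbelAux

open Function Set

section Meas

variable {N : ℕ} {α : Type*} [MeasurableSpace α]

lemma measurable_apply_index {δ : Type*} [MeasurableSpace δ] {β : Type*} [MeasurableSpace β]
    {z : δ → Fin N → β} (hz : Measurable z) {i : δ → Fin N} (hi : Measurable i) :
    Measurable fun x => z x (i x) := by
  intro t ht
  have : (fun x => z x (i x)) ⁻¹' t = ⋃ k : Fin N, (i ⁻¹' {k}) ∩ ((fun x => z x k) ⁻¹' t) := by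
    ext x
    simp only [mem_preimage, mem_iUnion, mem_inter_iff, mem_singleton_iff]
    constructor
    · intro h; exact ⟨i x, rfl, h⟩
    · rintro ⟨k, rfl, h⟩; exact h
  rw [this]
  exact MeasurableSet.iUnion fun k =>
    (hi (measurableSet_singleton k)).inter (((measurable_pi_apply k).comp hz) ht)

lemma measurable_amax {δ : Type*} [MeasurableSpace δ] (hN : 0 < N)
    {v : Fin N → δ → ℝ} (hv : ∀ n, Measurable (v n)) :
    Measurable fun x => amax hN (fun n => v n x) := by
  refine measurable_to_countable' fun k => ?_
  have : (fun x => amax hN (fun n => v n x)) ⁻¹' {k} =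
      ⋂ m : Fin N, ({x | v m x ≤ v k x} ∩ {x | v m x = v k x → k ≤ m}) := by
    ext x
    simp only [mem_preimage, mem_singleton_iff, amax_eq_iff, argmaxAt, mem_iInter,
      mem_inter_iff, mem_setOf_eq]
    exact ⟨fun h m => ⟨h.1 m, h.2 m⟩, fun h => ⟨fun m => (h m).1, fun m => (h m).2⟩⟩
  rw [this]
  refine MeasurableSet.iInter fun m => MeasurableSet.inter (measurableSet_le (hv m) (hv k)) ?_
  by_cases hkm : k ≤ m
  · simp only [hkm, implies_true, setOf_true]
    exact MeasurableSet.univ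
  · have : {x | v m x = v k x → k ≤ m} = {x | v m x = v k x}ᶜ := by
      ext x; simp [hkm]
    rw [this]
    exact (measurableSet_eq_fun (hv m) (hv k)).compl

lemma measurable_psi_comp (k : Fin N) :
    Measurable fun pr : (Fin N → α) × (Fin N → ℝ) => pr.1 ((sortPerm pr.2)⁻¹ k) := by
  intro t ht
  have : (fun pr : (Fin N → α) × (Fin N → ℝ) => pr.1 ((sortPerm pr.2)⁻¹ k)) ⁻¹' t =
      ⋃ τ : Equiv.Perm (Fin N),
        ((fun pr : (Fin N → α) × (Fin N → ℝ) => pr.2) ⁻¹' {g | sortPerm g = τ}) ∩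
          {pr : (Fin N → α) × (Fin N → ℝ) | pr.1 (τ⁻¹ k) ∈ t} := by
    ext pr
    simp only [mem_preimage, mem_iUnion, mem_inter_iff, mem_setOf_eq]
    constructor
    · intro h; exact ⟨sortPerm pr.2, rfl, h⟩
    · rintro ⟨τ, hτ, h⟩; rw [hτ]; exact h
  rw [this]
  exact MeasurableSet.iUnion fun τ =>
    (measurable_snd (measurableSet_sortPerm τ)).inter
      (((measurable_pi_apply (τ⁻¹ k)).comp measurable_fst) ht)

end Meas

section Measures

variable {N : ℕ} {α : Type*} [MeasurableSpace α]
variable (m1 : Measure α) (m2 : Measure ℝ) [IsProbabilityMeasure m1] [IsProbabilityMeasure m2]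

lemma map_comp_perm (τ : Equiv.Perm (Fin N)) :
    Measure.map (fun z : Fin N → α => z ∘ τ) (Measure.pi fun _ : Fin N => m1) =
      Measure.pi fun _ : Fin N => m1 := by
  refine (Measure.pi_eq (μ := fun _ : Fin N => m1) fun B hB => ?_).symm
  have hmeas : Measurable fun z : Fin N → α => z ∘ τ :=
    measurable_pi_lambda _ fun i => measurable_pi_apply (τ i)
  rw [Measure.map_apply hmeas (MeasurableSet.univ_pi hB)]
  have hpre : (fun z : Fin N → α => z ∘ τ) ⁻¹' (Set.pi univ B) =
      Set.pi univ (fun j => B (τ.symm j)) := by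
    ext z
    simp only [mem_preimage, mem_pi, mem_univ, true_implies, Function.comp_apply]
    constructor
    · intro h j
      have := h (τ.symm j)
      rwa [Equiv.apply_symm_apply] at this
    · intro h i
      have := h (τ i)
      rwa [Equiv.symm_apply_apply] at this
  rw [hpre, Measure.pi_pi]
  exact Equiv.prod_comp τ.symm (fun j => m1 (B j))

lemma map_update (k : Fin N) :
    Measure.map (fun pr : (Fin N → ℝ) × ℝ => Function.update pr.1 k pr.2)
      ((Measure.pi fun _ : Fin N => m2).prod m2) = Measure.pi fun _ : Fin N => m2 := by
  refine (Measure.pi_eq (μ := fun _ : Fin N => m2) fun B hB => ?_).symm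
  have hmeas : Measurable fun pr : (Fin N → ℝ) × ℝ => Function.update pr.1 k pr.2 := by
    refine measurable_pi_lambda _ fun i => ?_
    by_cases hik : i = k
    · subst hik
      simp only [Function.update_self]
      exact measurable_snd
    · simp only [Function.update_of_ne hik]
      exact (measurable_pi_apply i).comp measurable_fst
  rw [Measure.map_apply hmeas (MeasurableSet.univ_pi hB)]
  have hpre : (fun pr : (Fin N → ℝ) × ℝ => Function.update pr.1 k pr.2) ⁻¹' (Set.pi univ B) =
      (Set.pi univ (fun i => if i = k then univ else B i)) ×ˢ B k := by
    ext pr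
    simp only [mem_preimage, mem_pi, mem_univ, true_implies, mem_prod]
    constructor
    · intro h
      refine ⟨fun i => ?_, by simpa using h k⟩
      by_cases hik : i = k
      · simp [hik]
      · have := h i
        rw [Function.update_of_ne hik] at this
        simp [hik, this]
    · rintro ⟨h1, h2⟩ i
      by_cases hik : i = k
      · subst hik; simpa using h2
      · rw [Function.update_of_ne hik]
        have := h1 i
        simpa [hik] using this
  rw [hpre, Measure.prod_prod, Measure.pi_pi]
  have hcong : ∀ i : Fin N, m2 (if i = k then univ else B i) = if i = k then 1 else m2 (B i) := by
    intro i; by_cases hik : i = k <;> simp [hik]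
  rw [Finset.prod_congr rfl fun i _ => hcong i]
  rw [← Finset.mul_prod_erase Finset.univ _ (Finset.mem_univ k)]
  rw [← Finset.mul_prod_erase Finset.univ (fun i => m2 (B i)) (Finset.mem_univ k)]
  rw [Finset.prod_congr rfl fun i hi => by
    rw [if_neg (Finset.ne_of_mem_erase hi)]]
  simp [mul_comm]

end Measures

end GumbelAux
namespace GumbelAux

open Function Set

section Measures2

variable {N : ℕ} {α : Type*} [MeasurableSpace α]
variable (m1 : Measure α) (m2 : Measure ℝ) [IsProbabilityMeasure m1] [IsProbabilityMeasure m2]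

lemma measurable_ea : Measurable fun w : Fin N → α × ℝ =>
    ((fun n => (w n).1, fun n => (w n).2) : (Fin N → α) × (Fin N → ℝ)) :=
  Measurable.prodMk
    (measurable_pi_lambda _ fun n => measurable_fst.comp (measurable_pi_apply n))
    (measurable_pi_lambda _ fun n => measurable_snd.comp (measurable_pi_apply n))

lemma map_ea :
    Measure.map (fun w : Fin N → α × ℝ => ((fun n => (w n).1, fun n => (w n).2)))
      (Measure.pi fun _ : Fin N => m1.prod m2) =
      (Measure.pi fun _ : Fin N => m1).prod (Measure.pi fun _ : Fin N => m2) := by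
  have hCS1 : IsCountablySpanning (Set.pi univ '' Set.pi univ
      fun _ : Fin N => {s : Set α | MeasurableSet s}) :=
    IsCountablySpanning.pi fun _ => isCountablySpanning_measurableSet
  have hCS2 : IsCountablySpanning (Set.pi univ '' Set.pi univ
      fun _ : Fin N => {s : Set ℝ | MeasurableSet s}) :=
    IsCountablySpanning.pi fun _ => isCountablySpanning_measurableSet
  have hgen : (inferInstance : MeasurableSpace ((Fin N → α) × (Fin N → ℝ))) =
      MeasurableSpace.generateFrom (Set.image2 (· ×ˢ ·)
        (Set.pi univ '' Set.pi univ fun _ : Fin N => {s : Set α | MeasurableSet s})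
        (Set.pi univ '' Set.pi univ fun _ : Fin N => {s : Set ℝ | MeasurableSet s})) := by
    conv_lhs => rw [show (inferInstance : MeasurableSpace ((Fin N → α) × (Fin N → ℝ))) =
      @Prod.instMeasurableSpace _ _ (MeasurableSpace.pi) (MeasurableSpace.pi) from rfl]
    rw [← generateFrom_pi (α := fun _ : Fin N => α), ← generateFrom_pi (α := fun _ : Fin N => ℝ)]
    exact generateFrom_prod_eq hCS1 hCS2
  refine MeasureTheory.ext_of_generate_finite _ hgen
    (IsPiSystem.prod isPiSystem_pi isPiSystem_pi) ?_ ?_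
  · rintro _ ⟨_, ⟨B, hB, rfl⟩, _, ⟨C, hC, rfl⟩, rfl⟩
    simp only [Set.mem_pi, Set.mem_univ, true_implies, Set.mem_setOf_eq] at hB hC
    have hBC : MeasurableSet ((Set.pi univ B) ×ˢ (Set.pi univ C)) :=
      (MeasurableSet.univ_pi hB).prod (MeasurableSet.univ_pi hC)
    rw [Measure.map_apply measurable_ea hBC]
    have hpre : (fun w : Fin N → α × ℝ =>
        ((fun n => (w n).1, fun n => (w n).2) : (Fin N → α) × (Fin N → ℝ))) ⁻¹'
          ((Set.pi univ B) ×ˢ (Set.pi univ C)) = Set.pi univ fun n => (B n) ×ˢ (C n) := by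
      ext w
      simp only [mem_preimage, mem_prod, mem_pi, mem_univ, true_implies]
      exact ⟨fun ⟨h1, h2⟩ n => ⟨h1 n, h2 n⟩, fun h => ⟨fun n => (h n).1, fun n => (h n).2⟩⟩
    rw [hpre, Measure.pi_pi, Measure.prod_prod, Measure.pi_pi, Measure.pi_pi,
      ← Finset.prod_mul_distrib]
    exact Finset.prod_congr rfl fun n _ => Measure.prod_prod _ _
  · rw [Measure.map_apply measurable_ea MeasurableSet.univ]
    simp

lemma null_of_eq {δ : Type*} [MeasurableSpace δ] (m : Measure δ) [SFinite m]
    (m' : Measure ℝ) [SFinite m'] (h2 : ∀ x : ℝ, m' {x} = 0)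
    {c : δ → ℝ} (hc : Measurable c) : (m.prod m') {q : δ × ℝ | q.2 = c q.1} = 0 := by
  have hset : MeasurableSet {q : δ × ℝ | q.2 = c q.1} :=
    measurableSet_eq_fun measurable_snd (hc.comp measurable_fst)
  rw [Measure.prod_apply hset]
  have : ∀ x : δ, m' (Prod.mk x ⁻¹' {q : δ × ℝ | q.2 = c q.1}) = 0 := by
    intro x
    have : Prod.mk x ⁻¹' {q : δ × ℝ | q.2 = c q.1} = {c x} := by
      ext y; simp [Set.mem_preimage, Set.mem_setOf_eq]
    rw [this]; exact h2 _
  simp only [this, lintegral_zero]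

lemma map_triple_update (k : Fin N) :
    Measure.map (fun w : ((Fin N → α) × (Fin N → ℝ)) × ℝ =>
        ((w.1.1, Function.update w.1.2 k w.2) : (Fin N → α) × (Fin N → ℝ)))
      (((Measure.pi fun _ : Fin N => m1).prod (Measure.pi fun _ : Fin N => m2)).prod m2) =
      (Measure.pi fun _ : Fin N => m1).prod (Measure.pi fun _ : Fin N => m2) := by
  have hu : Measurable fun pr : (Fin N → ℝ) × ℝ => Function.update pr.1 k pr.2 := by
    refine measurable_pi_lambda _ fun i => ?_
    by_cases hik : i = k
    · subst hik; simp only [Function.update_self]; exact measurable_snd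
    · simp only [Function.update_of_ne hik]
      exact (measurable_pi_apply i).comp measurable_fst
  have hcomp : (fun w : ((Fin N → α) × (Fin N → ℝ)) × ℝ =>
      ((w.1.1, Function.update w.1.2 k w.2) : (Fin N → α) × (Fin N → ℝ))) =
      (Prod.map id (fun pr : (Fin N → ℝ) × ℝ => Function.update pr.1 k pr.2)) ∘
        (MeasurableEquiv.prodAssoc :
          ((Fin N → α) × (Fin N → ℝ)) × ℝ ≃ᵐ (Fin N → α) × ((Fin N → ℝ) × ℝ)) := by
    rfl
  rw [hcomp, ← Measure.map_map (measurable_id.prodMap hu) MeasurableEquiv.prodAssoc.measurable,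
    (measurePreserving_prodAssoc _ _ _).map_eq,
    ← Measure.map_prod_map _ _ measurable_id hu, Measure.map_id, map_update]

lemma null_of_coord_eq (k : Fin N)
    {c : (Fin N → α) × (Fin N → ℝ) → ℝ} (hc : Measurable c)
    (hcu : ∀ z g x, c (z, Function.update g k x) = c (z, g))
    (h2 : ∀ x : ℝ, m2 {x} = 0) :
    ((Measure.pi fun _ : Fin N => m1).prod (Measure.pi fun _ : Fin N => m2))
      {pr : (Fin N → α) × (Fin N → ℝ) | pr.2 k = c pr} = 0 := by
  have hA : MeasurableSet {pr : (Fin N → α) × (Fin N → ℝ) | pr.2 k = c pr} :=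
    measurableSet_eq_fun (measurable_snd.eval) hc
  have hUm : Measurable fun w : ((Fin N → α) × (Fin N → ℝ)) × ℝ =>
      ((w.1.1, Function.update w.1.2 k w.2) : (Fin N → α) × (Fin N → ℝ)) := by
    refine Measurable.prodMk (measurable_fst.comp measurable_fst) ?_
    refine measurable_pi_lambda _ fun i => ?_
    by_cases hik : i = k
    · subst hik; simp only [Function.update_self]; exact measurable_snd
    · simp only [Function.update_of_ne hik]
      exact (measurable_pi_apply i).comp (measurable_snd.comp measurable_fst)
  rw [← map_triple_update m1 m2 k, Measure.map_apply hUm hA]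
  have hpre : (fun w : ((Fin N → α) × (Fin N → ℝ)) × ℝ =>
      ((w.1.1, Function.update w.1.2 k w.2) : (Fin N → α) × (Fin N → ℝ))) ⁻¹'
        {pr : (Fin N → α) × (Fin N → ℝ) | pr.2 k = c pr} =
      {q : ((Fin N → α) × (Fin N → ℝ)) × ℝ | q.2 = c q.1} := by
    ext ⟨⟨z, g⟩, x⟩
    simp only [mem_preimage, mem_setOf_eq, Function.update_self, hcu]
  rw [hpre]
  exact null_of_eq _ m2 h2 hc

lemma map_psi :
    Measure.map (fun pr : (Fin N → α) × (Fin N → ℝ) =>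
        (((fun k => pr.1 ((sortPerm pr.2)⁻¹ k)) : Fin N → α), pr.2))
      ((Measure.pi fun _ : Fin N => m1).prod (Measure.pi fun _ : Fin N => m2)) =
      (Measure.pi fun _ : Fin N => m1).prod (Measure.pi fun _ : Fin N => m2) := by
  set νZ := Measure.pi fun _ : Fin N => m1 with hνZ
  set νG := Measure.pi fun _ : Fin N => m2 with hνG
  have hΨ : Measurable fun pr : (Fin N → α) × (Fin N → ℝ) =>
      (((fun k => pr.1 ((sortPerm pr.2)⁻¹ k)) : Fin N → α), pr.2) :=
    (measurable_pi_lambda _ fun k => measurable_psi_comp k).prodMk measurable_snd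
  have key : ∀ (E : Set ((Fin N → α) × (Fin N → ℝ))), MeasurableSet E →
      (νZ.prod νG) E = ∫⁻ g, νZ {z | (z, g) ∈ E} ∂νG := by
    intro E hE
    rw [← Measure.prod_swap, Measure.map_apply measurable_swap hE,
      Measure.prod_apply (measurable_swap hE)]
    rfl
  ext S hS
  rw [Measure.map_apply hΨ hS, key _ (hΨ hS), key _ hS]
  refine lintegral_congr fun g => ?_
  have hslice : MeasurableSet {z : Fin N → α | (z, g) ∈ S} :=
    measurable_prodMk_right hS
  have hzeq : {z : Fin N → α | (z, g) ∈ (fun pr : (Fin N → α) × (Fin N → ℝ) =>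
        (((fun k => pr.1 ((sortPerm pr.2)⁻¹ k)) : Fin N → α), pr.2)) ⁻¹' S} =
      (fun z : Fin N → α => z ∘ ((sortPerm g)⁻¹ : Equiv.Perm (Fin N))) ⁻¹'
        {z : Fin N → α | (z, g) ∈ S} := by
    rfl
  rw [hzeq]
  have hmap := Measure.map_apply (μ := νZ)
    (f := fun z : Fin N → α => z ∘ ((sortPerm g)⁻¹ : Equiv.Perm (Fin N)))
    (measurable_pi_lambda _ fun i => measurable_pi_apply _) hslice
  rw [← hmap, hνZ, map_comp_perm m1 ((sortPerm g)⁻¹)]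

end Measures2

end GumbelAux

open GumbelAux

/-- The Gumbel-max trick with sorted Gumbel noise.  If `Z₁, …, Z_N` are i.i.d.
with density `p`, `G₁, …, G_N` are i.i.d. standard Gumbel independent of the `Zₙ`,
`N* = argmax_n (log q(Zₙ) - log p(Zₙ) + Gₙ)`, and `Ñ*` is the analogous argmax with the
decreasing rearrangement `G̃₁ ≥ … ≥ G̃_N` of the Gumbel variables, then
`Z_{N*}` and `Z_{Ñ*}` have the same distribution. -/
theorem gumbel_max_sorted_same_distribution
    {Ω : Type*} [MeasureSpace Ω] [IsProbabilityMeasure (ℙ : Measure Ω)]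
    {α : Type*} [MeasurableSpace α] (μ : Measure α) [SigmaFinite μ]
    (p q : α → ℝ) (hpm : Measurable p) (hqm : Measurable q)
    (hp0 : ∀ z, 0 ≤ p z) (hq0 : ∀ z, 0 ≤ q z)
    (hp1 : (μ.withDensity fun z => ENNReal.ofReal (p z)) Set.univ = 1)
    (hq1 : (μ.withDensity fun z => ENNReal.ofReal (q z)) Set.univ = 1)
    (hac : ∀ᵐ z ∂μ, p z = 0 → q z = 0)
    (N : ℕ) (hN : 0 < N)
    (Z : Fin N → Ω → α) (G : Fin N → Ω → ℝ)
    (hZm : ∀ n, Measurable (Z n)) (hGm : ∀ n, Measurable (G n))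
    (hindep : iIndepFun (fun n ω => (Z n ω, G n ω)) ℙ)
    (hlaw : ∀ n, Measure.map (fun ω => (Z n ω, G n ω)) ℙ =
      (μ.withDensity fun z => ENNReal.ofReal (p z)).prod gumbelMeasure)
    (Gt : Ω → Fin N → ℝ) (hGtm : Measurable Gt)
    (hGt : ∀ ω, Antitone (Gt ω) ∧ ∃ σ : Equiv.Perm (Fin N), ∀ n, Gt ω n = G (σ n) ω)
    (Nstar Ntstar : Ω → Fin N) (hNm : Measurable Nstar) (hNtm : Measurable Ntstar)
    (hNstar : ∀ ω, argmaxAt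
      (fun n => Real.log (q (Z n ω)) - Real.log (p (Z n ω)) + G n ω) (Nstar ω))
    (hNtstar : ∀ ω, argmaxAt
      (fun n => Real.log (q (Z n ω)) - Real.log (p (Z n ω)) + Gt ω n) (Ntstar ω)) :
    Measure.map (fun ω => Z (Nstar ω) ω) ℙ = Measure.map (fun ω => Z (Ntstar ω) ω) ℙ := by
  classical
  set pμ : Measure α := μ.withDensity fun z => ENNReal.ofReal (p z) with hpμdef
  haveI hpμP : IsProbabilityMeasure pμ := ⟨hp1⟩
  haveI hgumSF : SFinite gumbelMeasure := by unfold gumbelMeasure; infer_instance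
  -- the Gumbel measure is a probability measure
  have hgum1 : gumbelMeasure Set.univ = 1 := by
    have h1 : (Measure.map (fun ω => (Z ⟨0, hN⟩ ω, G ⟨0, hN⟩ ω)) ℙ) Set.univ = 1 := by
      rw [Measure.map_apply ((hZm _).prodMk (hGm _)) MeasurableSet.univ]
      simp
    rw [hlaw ⟨0, hN⟩] at h1
    rwa [← Set.univ_prod_univ, Measure.prod_prod, hp1, one_mul] at h1
  haveI hgumP : IsProbabilityMeasure gumbelMeasure := ⟨hgum1⟩
  set r : α → ℝ := fun a => Real.log (q a) - Real.log (p a) with hrdef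
  have hrm : Measurable r := (Real.measurable_log.comp hqm).sub (Real.measurable_log.comp hpm)
  -- the law of the vector of pairs
  have hWm : Measurable fun ω (n : Fin N) => (Z n ω, G n ω) :=
    measurable_pi_lambda _ fun n => (hZm n).prodMk (hGm n)
  have hWlaw : Measure.map (fun ω (n : Fin N) => (Z n ω, G n ω)) ℙ =
      Measure.pi (fun _ : Fin N => pμ.prod gumbelMeasure) := by
    refine (Measure.pi_eq (μ := fun _ : Fin N => pμ.prod gumbelMeasure) fun B hB => ?_).symm
    rw [Measure.map_apply hWm (MeasurableSet.univ_pi hB)]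
    have hpre : (fun ω (n : Fin N) => (Z n ω, G n ω)) ⁻¹' Set.pi Set.univ B =
        ⋂ n ∈ Finset.univ, (fun ω => (Z n ω, G n ω)) ⁻¹' B n := by
      ext ω; simp
    rw [hpre, hindep.measure_inter_preimage_eq_mul Finset.univ (fun n _ => hB n)]
    refine Finset.prod_congr rfl fun n _ => ?_
    rw [← hlaw n, Measure.map_apply ((hZm n).prodMk (hGm n)) (hB n)]
  -- law of V
  set V : Ω → (Fin N → α) × (Fin N → ℝ) :=
    fun ω => (((fun n => Z n ω) : Fin N → α), ((fun n => G n ω) : Fin N → ℝ)) with hVdef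
  have hVm : Measurable V :=
    (measurable_pi_lambda _ hZm).prodMk (measurable_pi_lambda _ hGm)
  have hVlaw : Measure.map V ℙ =
      (Measure.pi fun _ : Fin N => pμ).prod (Measure.pi fun _ : Fin N => gumbelMeasure) := by
    have hcomp : V = (fun w : Fin N → α × ℝ =>
        ((fun n => (w n).1, fun n => (w n).2) : (Fin N → α) × (Fin N → ℝ))) ∘
          (fun ω (n : Fin N) => (Z n ω, G n ω)) := rfl
    rw [hcomp, ← Measure.map_map measurable_ea hWm, hWlaw, map_ea]
  -- Φ and Ψ
  set Φ : (Fin N → α) × (Fin N → ℝ) → α :=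
    fun pr => pr.1 (amax hN fun n => r (pr.1 n) + pr.2 n) with hΦdef
  have hΦm : Measurable Φ := by
    refine measurable_apply_index measurable_fst (measurable_amax hN fun n => ?_)
    exact (hrm.comp measurable_fst.eval).add measurable_snd.eval
  set Ψ : (Fin N → α) × (Fin N → ℝ) → (Fin N → α) × (Fin N → ℝ) :=
    fun pr => (((fun k => pr.1 ((sortPerm pr.2)⁻¹ k)) : Fin N → α), pr.2) with hΨdef
  have hΨm : Measurable Ψ :=
    (measurable_pi_lambda _ fun k => measurable_psi_comp k).prodMk measurable_snd
  -- Claim A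
  have hA : (fun ω => Z (Nstar ω) ω) = Φ ∘ V := by
    funext ω
    show Z (Nstar ω) ω = (V ω).1 (amax hN fun n => r ((V ω).1 n) + (V ω).2 n)
    have hfun : (fun n => r ((V ω).1 n) + (V ω).2 n) =
        fun n => Real.log (q (Z n ω)) - Real.log (p (Z n ω)) + G n ω := rfl
    rw [hfun, amax_eq hN (hNstar ω)]
  -- null events
  have hbadgen : ∀ (k : Fin N) (c : (Fin N → α) × (Fin N → ℝ) → ℝ), Measurable c →
      (∀ z g x, c (z, Function.update g k x) = c (z, g)) →
      ℙ {ω | G k ω = c (V ω)} = 0 := by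
    intro k c hc hcu
    have hset : MeasurableSet {pr : (Fin N → α) × (Fin N → ℝ) | pr.2 k = c pr} :=
      measurableSet_eq_fun measurable_snd.eval hc
    have hev : {ω | G k ω = c (V ω)} = V ⁻¹' {pr | pr.2 k = c pr} := rfl
    rw [hev, ← Measure.map_apply hVm hset, hVlaw]
    exact null_of_coord_eq pμ gumbelMeasure k hc hcu gumbel_singleton
  have hae1 : ∀ᵐ ω ∂ℙ, ∀ (k k' : Fin N), k ≠ k' → G k ω ≠ G k' ω := by
    rw [ae_all_iff]
    intro k
    rw [ae_all_iff]
    intro k'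
    by_cases hkk' : k = k'
    · exact Filter.Eventually.of_forall fun ω h => absurd hkk' h
    · have h0 := hbadgen k (fun pr => pr.2 k') measurable_snd.eval
        (fun z g x => Function.update_of_ne (Ne.symm hkk') _ _)
      rw [ae_iff]
      refine measure_mono_null ?_ h0
      intro ω hω
      simp only [Set.mem_setOf_eq] at hω
      push_neg at hω
      exact hω.2
  have hae2 : ∀ᵐ ω ∂ℙ, ∀ (τ : Equiv.Perm (Fin N)) (k k' : Fin N), k ≠ k' →
      r (Z (τ k) ω) + G k ω ≠ r (Z (τ k') ω) + G k' ω := by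
    rw [ae_all_iff]
    intro τ
    rw [ae_all_iff]
    intro k
    rw [ae_all_iff]
    intro k'
    by_cases hkk' : k = k'
    · exact Filter.Eventually.of_forall fun ω h => absurd hkk' h
    · have hcm : Measurable fun pr : (Fin N → α) × (Fin N → ℝ) =>
          r (pr.1 (τ k')) + pr.2 k' - r (pr.1 (τ k)) :=
        ((hrm.comp measurable_fst.eval).add measurable_snd.eval).sub
          (hrm.comp measurable_fst.eval)
      have h0 := hbadgen k (fun pr => r (pr.1 (τ k')) + pr.2 k' - r (pr.1 (τ k))) hcm
        (fun z g x => by simp only [Function.update_of_ne (Ne.symm hkk')])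
      rw [ae_iff]
      refine measure_mono_null ?_ h0
      intro ω hω
      simp only [Set.mem_setOf_eq] at hω
      push_neg at hω
      have := hω.2
      simp only [Set.mem_setOf_eq]
      linarith
  -- Claim B
  have hB : (fun ω => Z (Ntstar ω) ω) =ᵐ[ℙ] fun ω => Φ (Ψ (V ω)) := by
    filter_upwards [hae1, hae2] with ω h1 h2
    have hginj : Function.Injective fun n => G n ω := by
      intro a b hab
      by_contra hne
      exact h1 a b hne hab
    set g : Fin N → ℝ := fun n => G n ω with hgdef
    set z : Fin N → α := fun n => Z n ω with hzdef
    set σ : Equiv.Perm (Fin N) := sortPerm g with hσdef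
    have hσanti : Antitone (g ∘ σ) := antitone_sortPerm g
    obtain ⟨hGtanti, π, hπ⟩ := hGt ω
    have hπanti : Antitone (g ∘ π) := by
      intro i j hij
      have := hGtanti hij
      rwa [hπ, hπ] at this
    have hπσ : π = σ := antitone_perm_unique hginj hπanti hσanti
    have hGtσ : ∀ n, Gt ω n = g (σ n) := fun n => by rw [hπ n, hπσ]
    set f : Fin N → ℝ := fun k => r (z (σ⁻¹ k)) + g k with hfdef
    have hfinj : Function.Injective f := by
      intro a b hab
      by_contra hne
      exact h2 σ⁻¹ a b hne hab
    have hmaxf : ∀ k, f k ≤ f (σ (Ntstar ω)) := by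
      intro k
      have h3 := (hNtstar ω).1 (σ⁻¹ k)
      have e1 : Real.log (q (Z (σ⁻¹ k) ω)) - Real.log (p (Z (σ⁻¹ k) ω)) + Gt ω (σ⁻¹ k)
          = f k := by
        rw [hGtσ, Equiv.Perm.coe_inv, Equiv.apply_symm_apply]; rfl
      have e2 : Real.log (q (Z (Ntstar ω) ω)) - Real.log (p (Z (Ntstar ω) ω)) + Gt ω (Ntstar ω)
          = f (σ (Ntstar ω)) := by
        rw [hGtσ]
        show _ = r (z (σ⁻¹ (σ (Ntstar ω)))) + g (σ (Ntstar ω))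
        rw [Equiv.Perm.coe_inv, Equiv.symm_apply_apply]
      rw [← e1, ← e2]
      exact h3
    have hamax : amax hN f = σ (Ntstar ω) := by
      apply hfinj
      exact le_antisymm (hmaxf _) ((argmaxAt_amax hN f).1 _)
    show Z (Ntstar ω) ω = Φ (Ψ (V ω))
    have hΨV : Ψ (V ω) = (((fun k => z (σ⁻¹ k)) : Fin N → α), g) := rfl
    rw [hΨV]
    show Z (Ntstar ω) ω =
      (fun k => z (σ⁻¹ k)) (amax hN fun n => r ((fun k => z (σ⁻¹ k)) n) + g n)
    rw [show (fun n => r ((fun k => z (σ⁻¹ k)) n) + g n) = f from rfl, hamax]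
    show Z (Ntstar ω) ω = z (σ⁻¹ (σ (Ntstar ω)))
    rw [Equiv.Perm.coe_inv, Equiv.symm_apply_apply]
  -- conclusion
  have hmap1 : Measure.map (fun ω => Z (Nstar ω) ω) ℙ =
      Measure.map Φ ((Measure.pi fun _ : Fin N => pμ).prod
        (Measure.pi fun _ : Fin N => gumbelMeasure)) := by
    rw [hA, ← Measure.map_map hΦm hVm, hVlaw]
  have hmap2 : Measure.map (fun ω => Z (Ntstar ω) ω) ℙ =
      Measure.map Φ ((Measure.pi fun _ : Fin N => pμ).prod
        (Measure.pi fun _ : Fin N => gumbelMeasure)) := by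
    rw [Measure.map_congr hB,
      show (fun ω => Φ (Ψ (V ω))) = (Φ ∘ Ψ) ∘ V from rfl,
      ← Measure.map_map (hΦm.comp hΨm) hVm, hVlaw,
      ← Measure.map_map hΦm hΨm, map_psi]
  rw [hmap1, hmap2]
end

section
/- Let S_1, S_2, ... be i.i.d. Exponential(1) random variables and let Z_1, Z_2, ... be i.i.d. with probability density p, independent of the S_n. Let q be a probability density absolutely continuous with respect to p. For N ∈ ℕ define T_n = Σ_{m=1}^n S_m and T̃_{N,n} = Σ_{m=1}^n (N/(N−m+1)) S_m. Define N*_PFR = argmin_{n ∈ ℕ} T_n · p(Z_n)/q(Z_n) (whenever the minimum is attained) and N*_ORC = argmin_{n ≤ N} T̃_{N,n} · p(Z_n)/q(Z_n), ties broken by the smallest index. Then almost surely N*_ORC ≤ N*_PFR; moreover, on the event that N*_PFR is finite, there exists M ∈ ℕ such that for all N ≥ M, N*_ORC = N*_PFR. -/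
open MeasureTheory ProbabilityTheory ENNReal

/-- `k` is the argmin of `f` over `{1, 2, …}`, with ties broken by the smallest index. -/
def argminNatGE1 (f : ℕ → ℝ) (k : ℕ) : Prop :=
  1 ≤ k ∧ (∀ m, 1 ≤ m → f k ≤ f m) ∧ ∀ m, 1 ≤ m → f m = f k → k ≤ m

/-- `k` is the argmin of `f` over `{1, …, N}`, with ties broken by the smallest index. -/
def argminUpTo (N : ℕ) (f : ℕ → ℝ) (k : ℕ) : Prop :=
  1 ≤ k ∧ k ≤ N ∧ (∀ m, 1 ≤ m → m ≤ N → f k ≤ f m) ∧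
    ∀ m, 1 ≤ m → m ≤ N → f m = f k → k ≤ m

namespace OrcPfrAux

noncomputable def c (N m : ℕ) : ℝ := (N : ℝ) / ((N : ℝ) - (m : ℝ) + 1)

variable {s r : ℕ → ℝ}

noncomputable def T (s : ℕ → ℝ) (n : ℕ) : ℝ := ∑ m ∈ Finset.Icc 1 n, s m
noncomputable def Tt (s : ℕ → ℝ) (N n : ℕ) : ℝ := ∑ m ∈ Finset.Icc 1 n, c N m * s m

lemma den_pos {N m : ℕ} (hm : m ≤ N) : (0:ℝ) < (N : ℝ) - (m : ℝ) + 1 := by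
  have : (m:ℝ) ≤ N := Nat.cast_le.mpr hm
  linarith

lemma one_le_c {N m : ℕ} (h1 : 1 ≤ m) (hm : m ≤ N) : (1:ℝ) ≤ c N m := by
  have hd := den_pos hm
  have h1' : (1:ℝ) ≤ (m:ℝ) := by exact_mod_cast h1
  rw [c, le_div_iff₀ hd]
  linarith

lemma c_mono {N m m' : ℕ} (h1 : 1 ≤ m) (hmm : m ≤ m') (hm' : m' ≤ N) : c N m ≤ c N m' := by
  have hd' := den_pos hm'
  have hmm' : (m:ℝ) ≤ (m':ℝ) := Nat.cast_le.mpr hmm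
  have hN : (0:ℝ) ≤ N := Nat.cast_nonneg N
  exact div_le_div_of_nonneg_left hN hd' (by linarith)

lemma T_pos (hs : ∀ m, 1 ≤ m → 0 < s m) {n : ℕ} (hn : 1 ≤ n) : 0 < T s n := by
  apply Finset.sum_pos
  · intro m hm
    exact hs m (Finset.mem_Icc.mp hm).1
  · exact ⟨1, Finset.mem_Icc.mpr ⟨le_refl 1, hn⟩⟩

lemma T_le_Tt (hs : ∀ m, 1 ≤ m → 0 < s m) {N n : ℕ} (hn : n ≤ N) : T s n ≤ Tt s N n := by
  apply Finset.sum_le_sum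
  intro m hm
  obtain ⟨h1, h2⟩ := Finset.mem_Icc.mp hm
  have hc := one_le_c h1 (h2.trans hn)
  nlinarith [hs m h1]

lemma Tt_le_mul (hs : ∀ m, 1 ≤ m → 0 < s m) {N n k : ℕ} (h1 : 1 ≤ k) (hnk : n ≤ k)
    (hk : k ≤ N) : Tt s N n ≤ c N k * T s n := by
  rw [T, Finset.mul_sum]
  apply Finset.sum_le_sum
  intro m hm
  obtain ⟨hm1, hm2⟩ := Finset.mem_Icc.mp hm
  have hc := c_mono hm1 (hm2.trans hnk) hk
  nlinarith [hs m hm1]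

lemma ratio_mono (hs : ∀ m, 1 ≤ m → 0 < s m) {N a b : ℕ} (ha : 1 ≤ a) (hab : a ≤ b)
    (hb : b ≤ N) : Tt s N a * T s b ≤ Tt s N b * T s a := by
  induction b, hab using Nat.le_induction with
  | base => exact le_refl _
  | succ b hab ih =>
    have hbN : b ≤ N := by omega
    have ih' := ih hbN
    have hTsucc : T s (b+1) = T s b + s (b+1) := Finset.sum_Icc_succ_top (by omega) s
    have hTtsucc : Tt s N (b+1) = Tt s N b + c N (b+1) * s (b+1) :=
      Finset.sum_Icc_succ_top (by omega) _
    have hle : Tt s N a ≤ c N (b+1) * T s a := Tt_le_mul hs (by omega) (by omega) hb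
    have hsb := hs (b+1) (by omega)
    have hTa := (T_pos hs ha).le
    rw [hTsucc, hTtsucc]
    nlinarith

end OrcPfrAux

open OrcPfrAux in
lemma det_part1 {s r : ℕ → ℝ} (hs : ∀ m, 1 ≤ m → 0 < s m) (hr : ∀ n, 0 ≤ r n)
    {N nO nP : ℕ}
    (hO : argminUpTo N (fun n => Tt s N n * r n) nO)
    (hP : argminNatGE1 (fun n => T s n * r n) nP) : nO ≤ nP := by
  by_contra hcon
  push_neg at hcon
  obtain ⟨hO1, hON, hOmin, hOtie⟩ := hO
  obtain ⟨hP1, hPmin, hPtie⟩ := hP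
  have hPN : nP ≤ N := le_of_lt (lt_of_lt_of_le hcon hON)
  have hg : T s nP * r nP ≤ T s nO * r nO := hPmin nO (by omega)
  have hratio : Tt s N nP * T s nO ≤ Tt s N nO * T s nP := ratio_mono hs hP1 hcon.le hON
  have hTP := T_pos hs hP1
  have hTO := T_pos hs hO1
  have hTtP : 0 < Tt s N nP := lt_of_lt_of_le hTP (T_le_Tt hs hPN)
  have hkey : Tt s N nP * r nP ≤ Tt s N nO * r nO := by
    have h1 : Tt s N nP * T s nO * r nO ≤ Tt s N nO * T s nP * r nO :=
      mul_le_mul_of_nonneg_right hratio (hr nO)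
    have h2 : Tt s N nP * (T s nP * r nP) ≤ Tt s N nP * (T s nO * r nO) :=
      mul_le_mul_of_nonneg_left hg hTtP.le
    nlinarith
  have hle : Tt s N nO * r nO ≤ Tt s N nP * r nP := hOmin nP hP1 hPN
  have heq : Tt s N nP * r nP = Tt s N nO * r nO := le_antisymm hkey hle
  have := hOtie nP hP1 hPN heq
  omega

open OrcPfrAux in
lemma det_part2 {s r : ℕ → ℝ} (hs : ∀ m, 1 ≤ m → 0 < s m) (hr : ∀ n, 0 ≤ r n)
    {nP : ℕ} (hP : argminNatGE1 (fun n => T s n * r n) nP) :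
    ∃ M : ℕ, ∀ N, M ≤ N → ∀ nO, argminUpTo N (fun n => Tt s N n * r n) nO → nO = nP := by
  obtain ⟨hP1, hPmin, hPtie⟩ := hP
  set g : ℕ → ℝ := fun n => T s n * r n with hgdef
  have hstrict : ∀ n, 1 ≤ n → n < nP → g nP < g n := by
    intro n h1 h2
    refine lt_of_le_of_ne (hPmin n h1) fun he => ?_
    have := hPtie n h1 he.symm
    omega
  -- choose M
  have hM : ∃ M : ℕ, nP ≤ M ∧ ∀ N : ℕ, M ≤ N → ∀ n, 1 ≤ n → n < nP →
      c N nP * g nP < g n := by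
    rcases eq_or_lt_of_le (show (0:ℝ) ≤ g nP from
      mul_nonneg (T_pos hs hP1).le (hr nP)) with hz | hpos
    · exact ⟨nP, le_refl _, fun N hN n h1 h2 => by
        rw [← hz, mul_zero]
        have := hstrict n h1 h2
        linarith⟩
    · by_cases hnP1 : nP = 1
      · exact ⟨nP, le_refl _, fun N hN n h1 h2 => by omega⟩
      · have hne : (Finset.Icc 1 (nP - 1)).Nonempty := ⟨1, Finset.mem_Icc.mpr ⟨le_refl _, by omega⟩⟩
        set G := Finset.min' (Finset.image g (Finset.Icc 1 (nP-1))) (hne.image g) with hGdef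
        have hGmem := Finset.min'_mem (Finset.image g (Finset.Icc 1 (nP-1))) (hne.image g)
        obtain ⟨n0, hn0mem, hn0⟩ := Finset.mem_image.mp hGmem
        obtain ⟨hn01, hn02⟩ := Finset.mem_Icc.mp hn0mem
        have hGgt : g nP < G := by rw [hGdef, ← hn0]; exact hstrict n0 hn01 (by omega)
        have hGle : ∀ n, 1 ≤ n → n < nP → G ≤ g n := fun n h1 h2 =>
          Finset.min'_le _ _ (Finset.mem_image.mpr ⟨n, Finset.mem_Icc.mpr ⟨h1, by omega⟩, rfl⟩)
        obtain ⟨k, hk⟩ := exists_nat_gt (G * ((nP:ℝ) - 1) / (G - g nP))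
        refine ⟨max nP k, le_max_left _ _, fun N hN n h1 h2 => ?_⟩
        have hNP : nP ≤ N := le_trans (le_max_left _ _) hN
        have hkN : (k:ℝ) ≤ N := Nat.cast_le.mpr (le_trans (le_max_right _ _) hN)
        have hd := den_pos hNP
        have hNbig : G * ((nP:ℝ) - 1) / (G - g nP) < (N:ℝ) := lt_of_lt_of_le hk hkN
        have hGgp : (0:ℝ) < G - g nP := by linarith
        rw [div_lt_iff₀ hGgp] at hNbig
        have hcg : c N nP * g nP < G := by
          rw [c, div_mul_eq_mul_div, div_lt_iff₀ hd]
          have hnP1' : (1:ℝ) ≤ (nP:ℝ) := by exact_mod_cast hP1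
          nlinarith
        exact lt_of_lt_of_le hcg (hGle n h1 h2)
  obtain ⟨M, hMge, hMprop⟩ := hM
  refine ⟨M, fun N hN nO hO => ?_⟩
  have hle : nO ≤ nP := det_part1 hs hr hO ⟨hP1, hPmin, hPtie⟩
  rcases eq_or_lt_of_le hle with h | hlt
  · exact h
  · exfalso
    obtain ⟨hO1, hON, hOmin, hOtie⟩ := hO
    have hPN : nP ≤ N := le_trans hMge hN
    have h1 : Tt s N nO * r nO ≤ Tt s N nP * r nP := hOmin nP hP1 hPN
    have h2 : Tt s N nP * r nP ≤ c N nP * g nP := by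
      have := Tt_le_mul hs hP1 (le_refl nP) hPN
      have hgg : Tt s N nP * r nP ≤ (c N nP * T s nP) * r nP :=
        mul_le_mul_of_nonneg_right this (hr nP)
      rw [hgdef]; simp only []
      calc Tt s N nP * r nP ≤ (c N nP * T s nP) * r nP := hgg
        _ = c N nP * (T s nP * r nP) := by ring
    have h3 : c N nP * g nP < g nO := hMprop N hN nO hO1 hlt
    have h4 : g nO ≤ Tt s N nO * r nO :=
      mul_le_mul_of_nonneg_right (T_le_Tt hs hON) (hr nO)
    linarith

/-- Relation between the Poisson functional representation index
`N*_PFR = argmin_n T_n p(Z_n)/q(Z_n)` (with `T_n = ∑_{m=1}^n S_m`) and the ordered random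
coding index `N*_ORC = argmin_{n ≤ N} T̃_{N,n} p(Z_n)/q(Z_n)` (with
`T̃_{N,n} = ∑_{m=1}^n (N/(N-m+1)) S_m`): almost surely `N*_ORC ≤ N*_PFR`, and on the event
that `N*_PFR` is finite, `N*_ORC = N*_PFR` for all sufficiently large `N`. -/
theorem orc_le_pfr_and_eventually_eq
    {Ω : Type*} [MeasureSpace Ω] [IsProbabilityMeasure (ℙ : Measure Ω)]
    {α : Type*} [MeasurableSpace α] (μ : Measure α) [SigmaFinite μ]
    (p q : α → ℝ) (hpm : Measurable p) (hqm : Measurable q)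
    (hp0 : ∀ z, 0 ≤ p z) (hq0 : ∀ z, 0 ≤ q z)
    (hp1 : (μ.withDensity fun z => ENNReal.ofReal (p z)) Set.univ = 1)
    (hq1 : (μ.withDensity fun z => ENNReal.ofReal (q z)) Set.univ = 1)
    (hac : ∀ᵐ z ∂μ, p z = 0 → q z = 0)
    (S : ℕ → Ω → ℝ) (Z : ℕ → Ω → α)
    (hSm : ∀ n, Measurable (S n)) (hZm : ∀ n, Measurable (Z n))
    (hiid : iIndepFun (fun n ω => (S n ω, Z n ω)) ℙ)
    (hlaw : ∀ n, Measure.map (fun ω => (S n ω, Z n ω)) ℙ =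
      (expMeasure 1).prod (μ.withDensity fun z => ENNReal.ofReal (p z))) :
    ∀ᵐ ω ∂ℙ,
      (∀ (N nO nP : ℕ),
        argminUpTo N (fun n => (∑ m ∈ Finset.Icc 1 n, ((N : ℝ) / ((N : ℝ) - (m : ℝ) + 1)) * S m ω)
            * (p (Z n ω) / q (Z n ω))) nO →
        argminNatGE1 (fun n => (∑ m ∈ Finset.Icc 1 n, S m ω) * (p (Z n ω) / q (Z n ω))) nP →
        nO ≤ nP) ∧
      (∀ nP : ℕ,
        argminNatGE1 (fun n => (∑ m ∈ Finset.Icc 1 n, S m ω) * (p (Z n ω) / q (Z n ω))) nP →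
        ∃ M : ℕ, ∀ N, M ≤ N → ∀ nO,
          argminUpTo N (fun n => (∑ m ∈ Finset.Icc 1 n, ((N : ℝ) / ((N : ℝ) - (m : ℝ) + 1)) * S m ω)
              * (p (Z n ω) / q (Z n ω))) nO → nO = nP) := by
  haveI hνprob : IsProbabilityMeasure (μ.withDensity fun z => ENNReal.ofReal (p z)) := ⟨hp1⟩
  have hIic : expMeasure 1 (Set.Iic (0:ℝ)) = 0 := by
    rw [expMeasure, gammaMeasure, withDensity_apply _ measurableSet_Iic]
    have hae : Set.Iic (0:ℝ) =ᵐ[volume] Set.Iio 0 := (Iio_ae_eq_Iic (a := (0:ℝ))).symm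
    rw [setLIntegral_congr hae,
      setLIntegral_congr_fun measurableSet_Iio
        (fun ⦃x⦄ (hx : x ∈ Set.Iio (0:ℝ)) =>
          gammaPDF_of_neg (a := 1) (r := 1) hx)]
    simp
  have haeS : ∀ᵐ ω ∂ℙ, ∀ m : ℕ, 0 < S m ω := by
    rw [MeasureTheory.ae_all_iff]
    intro m
    have hmap : Measure.map (S m) ℙ = expMeasure 1 := by
      have h1 : (Measure.map (fun ω => (S m ω, Z m ω)) ℙ).fst = Measure.map (S m) ℙ :=
        Measure.fst_map_prodMk (hZm m)
      rw [← h1, hlaw m, Measure.fst_prod]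
    rw [ae_iff]
    have hset : {ω | ¬ 0 < S m ω} = S m ⁻¹' Set.Iic 0 := by ext ω; simp
    rw [hset, ← Measure.map_apply (hSm m) measurableSet_Iic, hmap, hIic]
  filter_upwards [haeS] with ω hω
  have hs : ∀ m, 1 ≤ m → 0 < (fun m => S m ω) m := fun m _ => hω m
  have hr : ∀ n, 0 ≤ (fun n => p (Z n ω) / q (Z n ω)) n :=
    fun n => div_nonneg (hp0 _) (hq0 _)
  exact ⟨fun N nO nP hO hP => det_part1 hs hr hO hP,
    fun nP hP => det_part2 hs hr hP⟩
end

section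
/- Let p and q be probability densities and let w_min be a real number with 0 < w_min ≤ inf_z p(z)/q(z). Let Z_1, Z_2, ... be i.i.d. with density p and let U_1, U_2, ... be i.i.d. uniform on [0,1), independent of each other and of the Z_n. Define N* as the smallest n such that U_n ≤ w_min · q(Z_n)/p(Z_n). Then: (i) for every z, w_min · q(z)/p(z) ≤ 1; (ii) the probability that any given candidate is accepted equals ∫ p(z) · w_min · q(z)/p(z) dz = w_min, so N* is almost surely finite and geometrically distributed with success probability w_min; and (iii) the random variable Z_{N*} has distribution with density q. -/
open MeasureTheory ProbabilityTheory ENNReal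

set_option maxHeartbeats 1000000 in
/-- Correctness of rejection sampling.  With candidates `Zₙ ∼ p`, uniforms
`Uₙ ∼ U[0,1)` (all independent) and acceptance rule `Uₙ ≤ w_min q(Zₙ)/p(Zₙ)` where
`0 < w_min ≤ inf_z p(z)/q(z)`: (i) the acceptance threshold is at most 1; (ii) the
acceptance probability of each candidate is `∫ p(z) w_min q(z)/p(z) dμ(z) = w_min`, the
first accepted index `N*` is almost surely finite and geometrically distributed with
success probability `w_min`; (iii) `Z_{N*}` has density `q`. -/
theorem rejection_sampling_correct
    {Ω : Type*} [MeasureSpace Ω] [IsProbabilityMeasure (ℙ : Measure Ω)]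
    {α : Type*} [MeasurableSpace α] (μ : Measure α) [SigmaFinite μ]
    (p q : α → ℝ) (hpm : Measurable p) (hqm : Measurable q)
    (hp0 : ∀ z, 0 ≤ p z) (hq0 : ∀ z, 0 ≤ q z)
    (hp1 : (μ.withDensity fun z => ENNReal.ofReal (p z)) Set.univ = 1)
    (hq1 : (μ.withDensity fun z => ENNReal.ofReal (q z)) Set.univ = 1)
    (wmin : ℝ) (hw : 0 < wmin) (hratio : ∀ z, wmin * q z ≤ p z)
    (Z : ℕ → Ω → α) (U : ℕ → Ω → ℝ)
    (hZm : ∀ n, Measurable (Z n)) (hUm : ∀ n, Measurable (U n))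
    (hiid : iIndepFun (fun n ω => (Z n ω, U n ω)) ℙ)
    (hlaw : ∀ n, Measure.map (fun ω => (Z n ω, U n ω)) ℙ =
      (μ.withDensity fun z => ENNReal.ofReal (p z)).prod
        (volume.restrict (Set.Ico (0 : ℝ) 1)))
    (Nstar : Ω → ℕ) (hNm : Measurable Nstar)
    (hNstar : ∀ ω, (∃ n, 1 ≤ n ∧ U n ω ≤ wmin * (q (Z n ω) / p (Z n ω))) →
      1 ≤ Nstar ω ∧ U (Nstar ω) ω ≤ wmin * (q (Z (Nstar ω) ω) / p (Z (Nstar ω) ω)) ∧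
        ∀ m, 1 ≤ m → U m ω ≤ wmin * (q (Z m ω) / p (Z m ω)) → Nstar ω ≤ m) :
    (∀ z, wmin * (q z / p z) ≤ 1) ∧
    (∫ z, p z * (wmin * (q z / p z)) ∂μ = wmin) ∧
    ℙ {ω | ∃ n, 1 ≤ n ∧ U n ω ≤ wmin * (q (Z n ω) / p (Z n ω))} = 1 ∧
    (∀ n : ℕ, 1 ≤ n →
      ℙ (Nstar ⁻¹' {n}) = ENNReal.ofReal ((1 - wmin) ^ (n - 1) * wmin)) ∧
    Measure.map (fun ω => Z (Nstar ω) ω) ℙ =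
      μ.withDensity fun z => ENNReal.ofReal (q z) := by
  -- lintegrals of p and q
  have hqint : ∫⁻ z, ENNReal.ofReal (q z) ∂μ = 1 := by
    rw [← setLIntegral_univ, ← withDensity_apply _ MeasurableSet.univ]; exact hq1
  have hpint : ∫⁻ z, ENNReal.ofReal (p z) ∂μ = 1 := by
    rw [← setLIntegral_univ, ← withDensity_apply _ MeasurableSet.univ]; exact hp1
  -- pointwise facts
  have hpf : ∀ z, p z * (wmin * (q z / p z)) = wmin * q z := by
    intro z
    rcases eq_or_lt_of_le (hp0 z) with h | h
    · have h1 : wmin * q z ≤ 0 := (hratio z).trans_eq h.symm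
      have h2 : 0 ≤ wmin * q z := mul_nonneg hw.le (hq0 z)
      rw [← h, zero_mul]; linarith
    · field_simp
  have hf0 : ∀ z, 0 ≤ wmin * (q z / p z) := fun z =>
    mul_nonneg hw.le (div_nonneg (hq0 z) (hp0 z))
  have hf1 : ∀ z, wmin * (q z / p z) ≤ 1 := by
    intro z
    rcases eq_or_lt_of_le (hp0 z) with h | h
    · rw [← h, _root_.div_zero, mul_zero]; norm_num
    · rw [mul_div_assoc']
      exact (div_le_one h).mpr (hratio z)
  have hfm : Measurable fun z => wmin * (q z / p z) :=
    measurable_const.mul (hqm.div hpm)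
  -- wmin ≤ 1
  have howle : ENNReal.ofReal wmin ≤ 1 := by
    calc ENNReal.ofReal wmin = ENNReal.ofReal wmin * ∫⁻ z, ENNReal.ofReal (q z) ∂μ := by
          rw [hqint, mul_one]
      _ = ∫⁻ z, ENNReal.ofReal (wmin * q z) ∂μ := by
          rw [← lintegral_const_mul _ hqm.ennreal_ofReal]
          exact lintegral_congr fun z => (ENNReal.ofReal_mul hw.le).symm
      _ ≤ ∫⁻ z, ENNReal.ofReal (p z) ∂μ :=
          lintegral_mono fun z => ENNReal.ofReal_le_ofReal (hratio z)
      _ = 1 := hpint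
  have hw1 : wmin ≤ 1 := ENNReal.ofReal_le_one.mp howle
  -- the acceptance region
  set T : Set (α × ℝ) := {x | x.2 ≤ wmin * (q x.1 / p x.1)} with hTdef
  have hTm : MeasurableSet T := measurableSet_le measurable_snd (hfm.comp measurable_fst)
  have hpairm : ∀ n, Measurable fun ω => (Z n ω, U n ω) := fun n => (hZm n).prodMk (hUm n)
  -- uniform measure of an initial segment
  have hUnif : ∀ a : ℝ, 0 ≤ a → a ≤ 1 →
      volume.restrict (Set.Ico (0:ℝ) 1) {u | u ≤ a} = ENNReal.ofReal a := by
    intro a h0 h1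
    rw [Measure.restrict_apply' measurableSet_Ico]
    apply le_antisymm
    · calc volume ({u | u ≤ a} ∩ Set.Ico 0 1) ≤ volume (Set.Icc 0 a) :=
            measure_mono fun u hu => ⟨hu.2.1, hu.1⟩
        _ = ENNReal.ofReal a := by rw [Real.volume_Icc, sub_zero]
    · calc ENNReal.ofReal a = volume (Set.Ico 0 a) := by rw [Real.volume_Ico, sub_zero]
        _ ≤ volume ({u | u ≤ a} ∩ Set.Ico 0 1) :=
            measure_mono fun u hu => ⟨hu.2.le, hu.1, lt_of_lt_of_le hu.2 h1⟩
  -- key computation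
  have key : ∀ (n : ℕ) (S : Set α), MeasurableSet S →
      ℙ ((fun ω => (Z n ω, U n ω)) ⁻¹' ((S ×ˢ Set.univ) ∩ T)) =
        ENNReal.ofReal wmin * ∫⁻ z in S, ENNReal.ofReal (q z) ∂μ := by
    intro n S hS
    have hSm : MeasurableSet ((S ×ˢ Set.univ) ∩ T) :=
      (hS.prod MeasurableSet.univ).inter hTm
    rw [← Measure.map_apply (hpairm n) hSm, hlaw n, Measure.prod_apply hSm]
    have h1 : ∀ z, (volume.restrict (Set.Ico (0:ℝ) 1)) (Prod.mk z ⁻¹' ((S ×ˢ Set.univ) ∩ T))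
        = S.indicator (fun z => ENNReal.ofReal (wmin * (q z / p z))) z := by
      intro z
      by_cases hz : z ∈ S
      · rw [Set.indicator_of_mem hz]
        have h2 : Prod.mk z ⁻¹' ((S ×ˢ Set.univ) ∩ T) = {u | u ≤ wmin * (q z / p z)} := by
          ext u; simp [hTdef, hz]
        rw [h2, hUnif _ (hf0 z) (hf1 z)]
      · rw [Set.indicator_of_notMem hz]
        have h2 : Prod.mk z ⁻¹' ((S ×ˢ Set.univ) ∩ T) = ∅ := by
          ext u; simp [hz]
        rw [h2, measure_empty]
    rw [lintegral_congr h1, lintegral_indicator hS _,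
      setLIntegral_withDensity_eq_setLIntegral_mul μ hpm.ennreal_ofReal
        (hfm.ennreal_ofReal) hS]
    have h3 : ∀ z, (fun z => ENNReal.ofReal (p z)) z * ENNReal.ofReal (wmin * (q z / p z))
        = ENNReal.ofReal wmin * ENNReal.ofReal (q z) := by
      intro z
      rw [← ENNReal.ofReal_mul (hp0 z), hpf z, ENNReal.ofReal_mul hw.le]
    calc ∫⁻ z in S, ((fun z => ENNReal.ofReal (p z)) * fun z => ENNReal.ofReal (wmin * (q z / p z))) z ∂μ
        = ∫⁻ z in S, ENNReal.ofReal wmin * ENNReal.ofReal (q z) ∂μ :=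
          lintegral_congr fun z => h3 z
      _ = ENNReal.ofReal wmin * ∫⁻ z in S, ENNReal.ofReal (q z) ∂μ :=
          lintegral_const_mul _ hqm.ennreal_ofReal
  -- acceptance probability
  have haccept : ∀ n, ℙ ((fun ω => (Z n ω, U n ω)) ⁻¹' T) = ENNReal.ofReal wmin := by
    intro n
    have h0 : (Set.univ ×ˢ Set.univ) ∩ T = T := by simp
    have := key n Set.univ MeasurableSet.univ
    rw [h0] at this
    rw [this, setLIntegral_univ, hqint, mul_one]
  have hcompl : ∀ n, ℙ ((fun ω => (Z n ω, U n ω)) ⁻¹' Tᶜ) = ENNReal.ofReal (1 - wmin) := by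
    intro n
    rw [Set.preimage_compl, measure_compl ((hpairm n) hTm) (measure_ne_top _ _),
      measure_univ, haccept n, ← ENNReal.ofReal_one, ← ENNReal.ofReal_sub _ hw.le]
  -- independence product formula
  have hprod := iIndepFun_iff_measure_inter_preimage_eq_mul.mp hiid
  -- the block probability
  have hblock : ∀ (n : ℕ), 1 ≤ n → ∀ (S : Set α), MeasurableSet S →
      ℙ ((fun ω => (Z n ω, U n ω)) ⁻¹' ((S ×ˢ Set.univ) ∩ T) ∩
          ⋂ m ∈ Finset.Ico 1 n, (fun ω => (Z m ω, U m ω)) ⁻¹' Tᶜ) =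
        ENNReal.ofReal wmin * (∫⁻ z in S, ENNReal.ofReal (q z) ∂μ) *
          ENNReal.ofReal (1 - wmin) ^ (n - 1) := by
    intro n hn S hS
    have hprodn := hprod (sets := fun m => if m = n then (S ×ˢ Set.univ) ∩ T else Tᶜ)
      (Finset.Icc 1 n) (fun m _ => by
        by_cases hmn : m = n
        · rw [if_pos hmn]; exact (hS.prod MeasurableSet.univ).inter hTm
        · rw [if_neg hmn]; exact hTm.compl)
    have hsn : (if n = n then (S ×ˢ Set.univ) ∩ T else Tᶜ) = (S ×ˢ Set.univ) ∩ T := if_pos rfl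
    have hset_eq : (⋂ m ∈ Finset.Icc 1 n, (fun ω => (Z m ω, U m ω)) ⁻¹'
          (if m = n then (S ×ˢ Set.univ) ∩ T else Tᶜ)) =
        (fun ω => (Z n ω, U n ω)) ⁻¹' ((S ×ˢ Set.univ) ∩ T) ∩
          ⋂ m ∈ Finset.Ico 1 n, (fun ω => (Z m ω, U m ω)) ⁻¹' Tᶜ := by
      ext ω
      simp only [Set.mem_iInter, Set.mem_inter_iff, Finset.mem_Icc, Finset.mem_Ico,
        Set.mem_preimage]
      constructor
      · intro h
        refine ⟨?_, fun m hm => ?_⟩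
        · have := h n ⟨hn, le_refl n⟩
          rwa [if_pos rfl] at this
        · have := h m ⟨hm.1, hm.2.le⟩
          rwa [if_neg (Nat.ne_of_lt hm.2)] at this
      · intro h m hm
        rcases eq_or_lt_of_le hm.2 with he | hlt
        · subst he; rw [if_pos rfl]; exact h.1
        · rw [if_neg (Nat.ne_of_lt hlt)]
          exact h.2 m ⟨hm.1, hlt⟩
    rw [hset_eq] at hprodn
    rw [hprodn]
    have hIcc : Finset.Icc 1 n = Finset.Ico 1 (n + 1) := by rw [Finset.Ico_add_one_right_eq_Icc]
    rw [hIcc, Finset.prod_Ico_succ_top hn]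
    have hlast : ℙ ((fun ω => (Z n ω, U n ω)) ⁻¹'
          (if n = n then (S ×ˢ Set.univ) ∩ T else Tᶜ)) =
        ENNReal.ofReal wmin * ∫⁻ z in S, ENNReal.ofReal (q z) ∂μ := by
      rw [if_pos rfl]; exact key n S hS
    have hrest : ∀ m ∈ Finset.Ico 1 n, ℙ ((fun ω => (Z m ω, U m ω)) ⁻¹'
          (if m = n then (S ×ˢ Set.univ) ∩ T else Tᶜ)) =
        ENNReal.ofReal (1 - wmin) := by
      intro m hm
      rw [Finset.mem_Ico] at hm
      rw [if_neg (Nat.ne_of_lt hm.2)]; exact hcompl m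
    rw [Finset.prod_congr rfl hrest, hlast, Finset.prod_const, Nat.card_Ico]
    ring
  -- the event that some candidate is accepted
  set E : Set Ω := {ω | ∃ n, 1 ≤ n ∧ U n ω ≤ wmin * (q (Z n ω) / p (Z n ω))} with hEdef
  have hEeq : E = ⋃ n, ⋃ (_ : 1 ≤ n), (fun ω => (Z n ω, U n ω)) ⁻¹' T := by
    ext ω; simp [hEdef, hTdef]
  have hEm : MeasurableSet E := by
    rw [hEeq]
    exact MeasurableSet.iUnion fun n => MeasurableSet.iUnion fun _ => (hpairm n) hTm
  have hEc : ℙ Eᶜ = 0 := by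
    have hle : ∀ k : ℕ, ℙ Eᶜ ≤ ENNReal.ofReal (1 - wmin) ^ k := by
      intro k
      have hsub : Eᶜ ⊆ ⋂ m ∈ Finset.Icc 1 k, (fun ω => (Z m ω, U m ω)) ⁻¹' Tᶜ := by
        intro ω hω
        simp only [Set.mem_iInter, Set.mem_preimage, Finset.mem_Icc]
        intro m hm
        intro hmem
        exact hω ⟨m, hm.1, hmem⟩
      calc ℙ Eᶜ ≤ ℙ (⋂ m ∈ Finset.Icc 1 k, (fun ω => (Z m ω, U m ω)) ⁻¹' Tᶜ) :=
            measure_mono hsub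
        _ = ∏ m ∈ Finset.Icc 1 k, ℙ ((fun ω => (Z m ω, U m ω)) ⁻¹' Tᶜ) :=
            hprod (Finset.Icc 1 k) (fun m _ => hTm.compl)
        _ = ENNReal.ofReal (1 - wmin) ^ k := by
            rw [Finset.prod_congr rfl (fun m _ => hcompl m), Finset.prod_const, Nat.card_Icc]
            simp
    have hr : ENNReal.ofReal (1 - wmin) < 1 := by
      rw [← ENNReal.ofReal_one]
      exact ENNReal.ofReal_lt_ofReal_iff_of_nonneg (sub_nonneg.mpr hw1) |>.mpr (by linarith)
    have htend := ENNReal.tendsto_pow_atTop_nhds_zero_of_lt_one hr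
    exact le_antisymm (ge_of_tendsto' htend hle) zero_le
  have hE1 : ℙ E = 1 := (prob_compl_eq_zero_iff hEm).mp hEc
  -- measure-mod-E helper
  have hmodE : ∀ A B : Set Ω, A ∩ E = B ∩ E → ℙ A = ℙ B := by
    intro A B h
    rw [← measure_inter_conull hEc, h, measure_inter_conull hEc]
  -- identification of {Nstar = n} ∩ (Z n ∈ S)
  have hNeq : ∀ (n : ℕ), 1 ≤ n → ∀ (S : Set α),
      (Nstar ⁻¹' {n} ∩ Z n ⁻¹' S) ∩ E =
        ((fun ω => (Z n ω, U n ω)) ⁻¹' ((S ×ˢ Set.univ) ∩ T) ∩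
          ⋂ m ∈ Finset.Ico 1 n, (fun ω => (Z m ω, U m ω)) ⁻¹' Tᶜ) ∩ E := by
    intro n hn S
    ext ω
    simp only [Set.mem_inter_iff, Set.mem_preimage, Set.mem_singleton_iff, Set.mem_iInter,
      Finset.mem_Ico, Set.mem_prod, Set.mem_univ, and_true, hTdef, Set.mem_setOf_eq,
      Set.mem_compl_iff]
    constructor
    · rintro ⟨⟨hNn, hZS⟩, hωE⟩
      obtain ⟨h1, hacc, hmin⟩ := hNstar ω hωE
      refine ⟨⟨⟨hZS, ?_⟩, fun m hm hmem => ?_⟩, hωE⟩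
      · rw [hNn] at hacc; exact hacc
      · have := hmin m hm.1 hmem
        rw [hNn] at this
        exact absurd this (Nat.not_le.mpr hm.2)
    · rintro ⟨⟨⟨hZS, hacc⟩, hnone⟩, hωE⟩
      obtain ⟨h1, haccN, hmin⟩ := hNstar ω hωE
      have hle : Nstar ω ≤ n := hmin n hn hacc
      rcases eq_or_lt_of_le hle with he | hlt
      · exact ⟨⟨he, hZS⟩, hωE⟩
      · exact absurd haccN (hnone (Nstar ω) ⟨h1, hlt⟩)
  have hgeo : ∀ (n : ℕ), 1 ≤ n → ∀ (S : Set α), MeasurableSet S →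
      ℙ (Nstar ⁻¹' {n} ∩ Z n ⁻¹' S) =
        ENNReal.ofReal wmin * (∫⁻ z in S, ENNReal.ofReal (q z) ∂μ) *
          ENNReal.ofReal (1 - wmin) ^ (n - 1) :=
    fun n hn S hS => (hmodE _ _ (hNeq n hn S)).trans (hblock n hn S hS)
  -- part (ii)
  have hint : ∫ z, p z * (wmin * (q z / p z)) ∂μ = wmin := by
    have hq_int : ∫ z, q z ∂μ = 1 := by
      rw [integral_eq_lintegral_of_nonneg_ae (Filter.Eventually.of_forall hq0)
        hqm.aestronglyMeasurable, hqint, ENNReal.toReal_one]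
    calc ∫ z, p z * (wmin * (q z / p z)) ∂μ = ∫ z, wmin * q z ∂μ :=
          integral_congr_ae (Filter.Eventually.of_forall fun z => hpf z)
      _ = wmin * ∫ z, q z ∂μ := integral_const_mul wmin q
      _ = wmin := by rw [hq_int, mul_one]
  -- part (iv): geometric distribution
  have hgeom : ∀ n : ℕ, 1 ≤ n →
      ℙ (Nstar ⁻¹' {n}) = ENNReal.ofReal ((1 - wmin) ^ (n - 1) * wmin) := by
    intro n hn
    have h0 : Nstar ⁻¹' {n} ∩ Z n ⁻¹' Set.univ = Nstar ⁻¹' {n} := by simp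
    have := hgeo n hn Set.univ MeasurableSet.univ
    rw [h0, setLIntegral_univ, hqint, mul_one] at this
    rw [this, ENNReal.ofReal_mul (pow_nonneg (sub_nonneg.mpr hw1) _), ENNReal.ofReal_pow (sub_nonneg.mpr hw1)]
    ring
  -- part (v): the law of Z_{N*}
  have hgm : Measurable fun ω => Z (Nstar ω) ω := by
    have h1 : Measurable fun x : Ω × ℕ => Z x.2 x.1 :=
      measurable_from_prod_countable_left fun n => hZm n
    exact h1.comp (measurable_id.prodMk hNm)
  have hmap : Measure.map (fun ω => Z (Nstar ω) ω) ℙ =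
      μ.withDensity fun z => ENNReal.ofReal (q z) := by
    ext S hS
    rw [Measure.map_apply hgm hS, withDensity_apply _ hS]
    have hdecomp : (fun ω => Z (Nstar ω) ω) ⁻¹' S = ⋃ n, Nstar ⁻¹' {n} ∩ Z n ⁻¹' S := by
      ext ω
      simp only [Set.mem_preimage, Set.mem_iUnion, Set.mem_inter_iff, Set.mem_singleton_iff]
      constructor
      · intro h; exact ⟨Nstar ω, rfl, h⟩
      · rintro ⟨n, rfl, h⟩; exact h
    have hdisj : Pairwise (Function.onFun Disjoint fun n => Nstar ⁻¹' {n} ∩ Z n ⁻¹' S) := by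
      intro i j hij
      apply Set.disjoint_left.mpr
      rintro ω ⟨hi, _⟩ ⟨hj, _⟩
      exact hij (hi.symm.trans hj)
    rw [hdecomp, measure_iUnion hdisj
      (fun n => (hNm (measurableSet_singleton n)).inter ((hZm n) hS))]
    have hzero : ℙ (Nstar ⁻¹' {0} ∩ Z 0 ⁻¹' S) = 0 := by
      have hsub : (Nstar ⁻¹' {0} ∩ Z 0 ⁻¹' S) ∩ E = ∅ := by
        ext ω
        simp only [Set.mem_inter_iff, Set.mem_preimage, Set.mem_singleton_iff,
          Set.mem_empty_iff_false, iff_false, not_and]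
        rintro ⟨hN0, _⟩ hωE
        obtain ⟨h1, _, _⟩ := hNstar ω hωE
        omega
      have := hmodE (Nstar ⁻¹' {0} ∩ Z 0 ⁻¹' S) ∅ (by rw [hsub, Set.empty_inter])
      rwa [measure_empty] at this
    rw [tsum_eq_zero_add' ENNReal.summable, hzero, zero_add]
    have hterm : ∀ n : ℕ, ℙ (Nstar ⁻¹' {n + 1} ∩ Z (n + 1) ⁻¹' S) =
        ENNReal.ofReal wmin * (∫⁻ z in S, ENNReal.ofReal (q z) ∂μ) *
          ENNReal.ofReal (1 - wmin) ^ n := by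
      intro n
      have := hgeo (n + 1) (Nat.le_add_left 1 n) S hS
      simpa using this
    rw [tsum_congr hterm, ENNReal.tsum_mul_left, ENNReal.tsum_geometric]
    have h1w : (1 : ℝ≥0∞) - ENNReal.ofReal (1 - wmin) = ENNReal.ofReal wmin := by
      rw [← ENNReal.ofReal_one, ← ENNReal.ofReal_sub _ (sub_nonneg.mpr hw1)]
      norm_num
    rw [h1w, mul_comm (ENNReal.ofReal wmin) _, mul_assoc,
      ENNReal.mul_inv_cancel (by simpa using hw) ENNReal.ofReal_ne_top, mul_one]
  exact ⟨hf1, hint, hE1, hgeom, hmap⟩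
end

section
/- Let p and q be probability densities with 0 < w_min ≤ inf_z p(z)/q(z), let N ∈ ℕ, let Z_1,...,Z_N be i.i.d. with density p and U_1,...,U_N i.i.d. uniform on [0,1), all independent. Run rejection sampling (accept the first n with U_n ≤ w_min q(Z_n)/p(Z_n)) but accept the N-th candidate unconditionally if the first N−1 are rejected, and let Z* denote the output. Then Z* has density β·p(z) + (1−β)·q(z), where β = (1−w_min)^{N−1}, and consequently D_TV(law(Z*), q) = β · D_TV(p, q). In particular the total variation divergence from q decays exponentially in N. -/
open MeasureTheory ProbabilityTheory ENNReal

/-- Total variation distance between two measures. -/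
noncomputable def tvDist {α : Type*} [MeasurableSpace α] (μ ν : Measure α) : ℝ :=
  ⨆ s : {s : Set α // MeasurableSet s}, |(μ s.1).toReal - (ν s.1).toReal|

private lemma geom_aux (w : ℝ) (M : ℕ) :
    ∑ k ∈ Finset.range M, (1 - w) ^ k * w = 1 - (1 - w) ^ M := by
  induction M with
  | zero => simp
  | succ M ih => rw [Finset.sum_range_succ, ih]; ring

private lemma unif_aux (t : ℝ) (h1 : t ≤ 1) :
    volume.restrict (Set.Ico (0:ℝ) 1) (Set.Iic t) = ENNReal.ofReal t := by
  rw [Measure.restrict_apply measurableSet_Iic]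
  apply le_antisymm
  · calc volume (Set.Iic t ∩ Set.Ico 0 1) ≤ volume (Set.Icc 0 t) :=
        measure_mono (fun u hu => ⟨hu.2.1, hu.1⟩)
      _ = ENNReal.ofReal t := by rw [Real.volume_Icc]; norm_num
  · calc ENNReal.ofReal t = volume (Set.Ico 0 t) := by rw [Real.volume_Ico]; norm_num
      _ ≤ volume (Set.Iic t ∩ Set.Ico 0 1) :=
        measure_mono (fun u hu => ⟨hu.2.le, hu.1, lt_of_lt_of_le hu.2 h1⟩)

private lemma sum_Icc_one (M : ℕ) (f : ℕ → ENNReal) :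
    ∑ n ∈ Finset.Icc 1 M, f n = ∑ k ∈ Finset.range M, f (k + 1) := by
  have h : Finset.Icc 1 M = Finset.Ico 1 (M + 1) := by
    ext m; simp [Finset.mem_Icc, Finset.mem_Ico]
  rw [h, Finset.sum_Ico_eq_sum_range]
  simp [add_comm]

/-- Truncated rejection sampling. -/
theorem truncated_rejection_sampling
    {Ω : Type*} [MeasureSpace Ω] [IsProbabilityMeasure (ℙ : Measure Ω)]
    {α : Type*} [MeasurableSpace α] (μ : Measure α) [SigmaFinite μ]
    (p q : α → ℝ) (hpm : Measurable p) (hqm : Measurable q)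
    (hp0 : ∀ z, 0 ≤ p z) (hq0 : ∀ z, 0 ≤ q z)
    (hp1 : (μ.withDensity fun z => ENNReal.ofReal (p z)) Set.univ = 1)
    (hq1 : (μ.withDensity fun z => ENNReal.ofReal (q z)) Set.univ = 1)
    (wmin : ℝ) (hw : 0 < wmin) (hratio : ∀ z, wmin * q z ≤ p z)
    (N : ℕ) (hN : 1 ≤ N)
    (Z : ℕ → Ω → α) (U : ℕ → Ω → ℝ)
    (hZm : ∀ n, Measurable (Z n)) (hUm : ∀ n, Measurable (U n))
    (hiid : iIndepFun (fun n ω => (Z n ω, U n ω)) ℙ)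
    (hlaw : ∀ n, Measure.map (fun ω => (Z n ω, U n ω)) ℙ =
      (μ.withDensity fun z => ENNReal.ofReal (p z)).prod
        (volume.restrict (Set.Ico (0 : ℝ) 1)))
    (Nsel : Ω → ℕ) (hNm : Measurable Nsel)
    (hNsel : ∀ ω,
      ((∃ n, 1 ≤ n ∧ n ≤ N - 1 ∧ U n ω ≤ wmin * (q (Z n ω) / p (Z n ω))) →
        1 ≤ Nsel ω ∧ Nsel ω ≤ N - 1 ∧
          U (Nsel ω) ω ≤ wmin * (q (Z (Nsel ω) ω) / p (Z (Nsel ω) ω)) ∧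
          ∀ m, 1 ≤ m → m ≤ N - 1 → U m ω ≤ wmin * (q (Z m ω) / p (Z m ω)) → Nsel ω ≤ m) ∧
      ((¬ ∃ n, 1 ≤ n ∧ n ≤ N - 1 ∧ U n ω ≤ wmin * (q (Z n ω) / p (Z n ω))) →
        Nsel ω = N)) :
    Measure.map (fun ω => Z (Nsel ω) ω) ℙ =
      (μ.withDensity fun z => ENNReal.ofReal
        ((1 - wmin) ^ (N - 1) * p z + (1 - (1 - wmin) ^ (N - 1)) * q z)) ∧
    tvDist (Measure.map (fun ω => Z (Nsel ω) ω) ℙ)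
        (μ.withDensity fun z => ENNReal.ofReal (q z)) =
      (1 - wmin) ^ (N - 1) *
        tvDist (μ.withDensity fun z => ENNReal.ofReal (p z))
          (μ.withDensity fun z => ENNReal.ofReal (q z)) := by
  set pair : ℕ → Ω → α × ℝ := fun n ω => (Z n ω, U n ω) with hpair
  set νp : Measure α := μ.withDensity fun z => ENNReal.ofReal (p z) with hνp
  set νq : Measure α := μ.withDensity fun z => ENNReal.ofReal (q z) with hνq
  have hpairm : ∀ n, Measurable (pair n) := fun n => (hZm n).prodMk (hUm n)
  set C : Set (α × ℝ) := {x | x.2 ≤ wmin * (q x.1 / p x.1)} with hC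
  have hCm : MeasurableSet C :=
    measurableSet_le measurable_snd ((measurable_const.mul (hqm.div hpm)).comp measurable_fst)
  -- basic facts about the ratio
  have hqz : ∀ z, p z = 0 → q z = 0 := by
    intro z hz
    nlinarith [hq0 z, hratio z]
  have hg0 : ∀ z, 0 ≤ wmin * (q z / p z) := fun z =>
    mul_nonneg hw.le (div_nonneg (hq0 z) (hp0 z))
  have hg1 : ∀ z, wmin * (q z / p z) ≤ 1 := by
    intro z
    rcases eq_or_lt_of_le (hp0 z) with hz | hz
    · rw [hqz z hz.symm]; simp
    · rw [mul_div_assoc']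
      exact div_le_one_of_le₀ (hratio z) hz.le
  have hpg : ∀ z, ENNReal.ofReal (p z) * ENNReal.ofReal (wmin * (q z / p z))
      = ENNReal.ofReal (wmin * q z) := by
    intro z
    rw [← ENNReal.ofReal_mul (hp0 z)]
    congr 1
    rcases eq_or_lt_of_le (hp0 z) with hz | hz
    · rw [← hz, hqz z hz.symm]; ring
    · field_simp
  -- law of each pair applied to sets
  have hmap : ∀ n (B : Set (α × ℝ)), MeasurableSet B →
      ℙ (pair n ⁻¹' B) = (νp.prod (volume.restrict (Set.Ico (0:ℝ) 1))) B := by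
    intro n B hB
    rw [← hlaw n, Measure.map_apply (hpairm n) hB]
  -- probability of acceptance together with Z ∈ S
  have hAS : ∀ n (S : Set α), MeasurableSet S →
      ℙ (pair n ⁻¹' (C ∩ S ×ˢ Set.univ)) = ENNReal.ofReal wmin * νq S := by
    intro n S hS
    rw [hmap n _ (hCm.inter (hS.prod MeasurableSet.univ)),
      Measure.prod_apply (hCm.inter (hS.prod MeasurableSet.univ))]
    have hsec : ∀ z, (volume.restrict (Set.Ico (0:ℝ) 1)) (Prod.mk z ⁻¹' (C ∩ S ×ˢ Set.univ))
        = S.indicator (fun z => ENNReal.ofReal (wmin * (q z / p z))) z := by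
      intro z
      by_cases hz : z ∈ S
      · have : Prod.mk z ⁻¹' (C ∩ S ×ˢ Set.univ) = Set.Iic (wmin * (q z / p z)) := by
          ext u; simp [hC, hz]
        rw [this, unif_aux _ (hg1 z), Set.indicator_of_mem hz]
      · have : Prod.mk z ⁻¹' (C ∩ S ×ˢ Set.univ) = ∅ := by
          ext u; simp [hC, hz]
        rw [this, Set.indicator_of_notMem hz]; simp
    simp_rw [hsec]
    rw [lintegral_indicator hS _, hνp, restrict_withDensity hS,
      lintegral_withDensity_eq_lintegral_mul _ hpm.ennreal_ofReal
        (show Measurable fun z => ENNReal.ofReal (wmin * (q z / p z)) from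
          (measurable_const.mul (hqm.div hpm)).ennreal_ofReal)]
    simp_rw [Pi.mul_apply, hpg]
    have : ∀ z, ENNReal.ofReal (wmin * q z) = ENNReal.ofReal wmin * ENNReal.ofReal (q z) :=
      fun z => ENNReal.ofReal_mul hw.le
    simp_rw [this]
    rw [lintegral_const_mul _ hqm.ennreal_ofReal, hνq, withDensity_apply _ hS]
  -- probability of acceptance
  have hA : ∀ n, ℙ (pair n ⁻¹' C) = ENNReal.ofReal wmin := by
    intro n
    have h := hAS n Set.univ MeasurableSet.univ
    simpa [hq1] using h
  have hwle : wmin ≤ 1 := by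
    have h := hA 0
    have h2 : ℙ (pair 0 ⁻¹' C) ≤ 1 := prob_le_one
    rw [h] at h2
    exact ENNReal.ofReal_le_one.mp h2
  have hAc : ∀ n, ℙ (pair n ⁻¹' Cᶜ) = ENNReal.ofReal (1 - wmin) := by
    intro n
    rw [Set.preimage_compl, measure_compl ((hpairm n) hCm) (measure_ne_top _ _), hA n,
      measure_univ, ENNReal.ofReal_sub _ hw.le, ENNReal.ofReal_one]
  have hZS : ∀ n (S : Set α), MeasurableSet S →
      ℙ (pair n ⁻¹' (S ×ˢ Set.univ)) = νp S := by
    intro n S hS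
    rw [hmap n _ (hS.prod MeasurableSet.univ), Measure.prod_prod]
    rw [Measure.restrict_apply_univ, Real.volume_Ico]
    norm_num
  -- the event decomposition
  have hlt1 : ∀ n m : ℕ, m ∈ Finset.Icc 1 n → (1 ≤ m ∧ m ≤ n) := by
    intro n m hm; simpa [Finset.mem_Icc] using hm
  have hkey1 : ∀ n, 1 ≤ n → n < N → ∀ S : Set α,
      Nsel ⁻¹' {n} ∩ Z n ⁻¹' S =
        ⋂ m ∈ Finset.Icc 1 n,
          (if m = n then pair n ⁻¹' (C ∩ S ×ˢ Set.univ) else pair m ⁻¹' Cᶜ) := by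
    intro n hn1 hnN S
    ext ω
    simp only [Set.mem_inter_iff, Set.mem_preimage, Set.mem_singleton_iff, Set.mem_iInter,
      Finset.mem_Icc]
    constructor
    · rintro ⟨hsel, hzS⟩
      have hex : ∃ k, 1 ≤ k ∧ k ≤ N - 1 ∧ U k ω ≤ wmin * (q (Z k ω) / p (Z k ω)) := by
        by_contra hno
        have := (hNsel ω).2 hno
        omega
      obtain ⟨-, -, hacc, hmin⟩ := (hNsel ω).1 hex
      rw [hsel] at hacc
      intro m hm
      by_cases hmn : m = n
      · subst hmn
        rw [if_pos rfl]
        exact ⟨hacc, hzS, trivial⟩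
      · rw [if_neg hmn]
        intro haccm
        have h2 : Nsel ω ≤ m := hmin m hm.1 (by omega) haccm
        omega
    · intro h
      have hd := h n ⟨hn1, le_rfl⟩
      rw [if_pos rfl] at hd
      obtain ⟨haccn, hzS, -⟩ := hd
      have hex : ∃ k, 1 ≤ k ∧ k ≤ N - 1 ∧ U k ω ≤ wmin * (q (Z k ω) / p (Z k ω)) :=
        ⟨n, hn1, by omega, haccn⟩
      obtain ⟨hs1, hs2, hacc, hmin⟩ := (hNsel ω).1 hex
      have hle : Nsel ω ≤ n := hmin n hn1 (by omega) haccn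
      have heq : Nsel ω = n := by
        by_contra hne
        have hmem := h (Nsel ω) ⟨hs1, by omega⟩
        rw [if_neg hne] at hmem
        exact hmem hacc
      exact ⟨heq, hzS⟩
  have hkey2 : ∀ S : Set α,
      Nsel ⁻¹' {N} ∩ Z N ⁻¹' S =
        ⋂ m ∈ Finset.Icc 1 N,
          (if m = N then pair N ⁻¹' (S ×ˢ Set.univ) else pair m ⁻¹' Cᶜ) := by
    intro S
    ext ω
    simp only [Set.mem_inter_iff, Set.mem_preimage, Set.mem_singleton_iff, Set.mem_iInter,
      Finset.mem_Icc]
    constructor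
    · rintro ⟨hsel, hzS⟩
      intro m hm
      by_cases hmn : m = N
      · subst hmn; rw [if_pos rfl]; exact ⟨hzS, trivial⟩
      · rw [if_neg hmn]
        intro haccm
        have hex : ∃ k, 1 ≤ k ∧ k ≤ N - 1 ∧ U k ω ≤ wmin * (q (Z k ω) / p (Z k ω)) :=
          ⟨m, hm.1, by omega, haccm⟩
        have h2 := ((hNsel ω).1 hex).2.1
        omega
    · intro h
      have hno : ¬ ∃ k, 1 ≤ k ∧ k ≤ N - 1 ∧ U k ω ≤ wmin * (q (Z k ω) / p (Z k ω)) := by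
        rintro ⟨k, hk1, hk2, hacck⟩
        have hmem := h k ⟨hk1, by omega⟩
        rw [if_neg (by omega)] at hmem
        exact hmem hacck
      have hsel := (hNsel ω).2 hno
      have hNN := h N ⟨hN, le_rfl⟩
      rw [if_pos rfl] at hNN
      exact ⟨hsel, hNN.1⟩
  -- Finset helpers
  have hinsert : ∀ n : ℕ, 1 ≤ n → Finset.Icc 1 n = insert n (Finset.Icc 1 (n-1)) := by
    intro n hn; ext m; simp only [Finset.mem_Icc, Finset.mem_insert]; omega
  have hnotmem : ∀ n : ℕ, 1 ≤ n → n ∉ Finset.Icc 1 (n-1) := by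
    intro n hn; simp only [Finset.mem_Icc]; omega
  -- product computations
  have hprod1 : ∀ n, 1 ≤ n → n < N → ∀ S : Set α, MeasurableSet S →
      ℙ (Nsel ⁻¹' {n} ∩ Z n ⁻¹' S) =
        ENNReal.ofReal (1 - wmin) ^ (n - 1) * (ENNReal.ofReal wmin * νq S) := by
    intro n hn1 hnN S hS
    rw [hkey1 n hn1 hnN S]
    have hind := hiid.meas_biInter (S := Finset.Icc 1 n)
      (s := fun m => if m = n then pair n ⁻¹' (C ∩ S ×ˢ Set.univ) else pair m ⁻¹' Cᶜ)
      (by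
        intro m _
        by_cases hmn : m = n
        · subst hmn; rw [if_pos rfl]
          exact ⟨C ∩ S ×ˢ Set.univ, hCm.inter (hS.prod MeasurableSet.univ), rfl⟩
        · rw [if_neg hmn]; exact ⟨Cᶜ, hCm.compl, rfl⟩)
    rw [hind]
    rw [hinsert n hn1, Finset.prod_insert (hnotmem n hn1), if_pos rfl, hAS n S hS]
    have hrest : ∏ m ∈ Finset.Icc 1 (n-1),
        ℙ (if m = n then pair n ⁻¹' (C ∩ S ×ˢ Set.univ) else pair m ⁻¹' Cᶜ)
        = ENNReal.ofReal (1 - wmin) ^ (n - 1) := by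
      have hconst : ∀ m ∈ Finset.Icc 1 (n-1),
          ℙ (if m = n then pair n ⁻¹' (C ∩ S ×ˢ Set.univ) else pair m ⁻¹' Cᶜ)
            = ENNReal.ofReal (1 - wmin) := by
        intro m hm
        have := hlt1 _ _ hm
        rw [if_neg (by omega)]
        exact hAc m
      rw [Finset.prod_congr rfl hconst, Finset.prod_const, Nat.card_Icc]
      congr 1
    rw [hrest, mul_comm]
  have hprod2 : ∀ S : Set α, MeasurableSet S →
      ℙ (Nsel ⁻¹' {N} ∩ Z N ⁻¹' S) =
        ENNReal.ofReal (1 - wmin) ^ (N - 1) * νp S := by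
    intro S hS
    rw [hkey2 S]
    have hind := hiid.meas_biInter (S := Finset.Icc 1 N)
      (s := fun m => if m = N then pair N ⁻¹' (S ×ˢ Set.univ) else pair m ⁻¹' Cᶜ)
      (by
        intro m _
        by_cases hmn : m = N
        · subst hmn; rw [if_pos rfl]
          exact ⟨S ×ˢ Set.univ, hS.prod MeasurableSet.univ, rfl⟩
        · rw [if_neg hmn]; exact ⟨Cᶜ, hCm.compl, rfl⟩)
    rw [hind]
    rw [hinsert N hN, Finset.prod_insert (hnotmem N hN), if_pos rfl, hZS N S hS]
    have hrest : ∏ m ∈ Finset.Icc 1 (N-1),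
        ℙ (if m = N then pair N ⁻¹' (S ×ˢ Set.univ) else pair m ⁻¹' Cᶜ)
        = ENNReal.ofReal (1 - wmin) ^ (N - 1) := by
      have hconst : ∀ m ∈ Finset.Icc 1 (N-1),
          ℙ (if m = N then pair N ⁻¹' (S ×ˢ Set.univ) else pair m ⁻¹' Cᶜ)
            = ENNReal.ofReal (1 - wmin) := by
        intro m hm
        have := hlt1 _ _ hm
        rw [if_neg (by omega)]
        exact hAc m
      rw [Finset.prod_congr rfl hconst, Finset.prod_const, Nat.card_Icc]
      congr 1
    rw [hrest, mul_comm]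
  -- nonnegativity facts
  have hb0 : (0:ℝ) ≤ 1 - wmin := by linarith
  have hβ0 : (0:ℝ) ≤ (1 - wmin) ^ (N - 1) := pow_nonneg hb0 _
  have hβ1 : (1 - wmin) ^ (N - 1) ≤ 1 := pow_le_one₀ hb0 (by linarith)
  have hβ1' : (0:ℝ) ≤ 1 - (1 - wmin) ^ (N - 1) := by linarith
  -- measurability of output
  have hZstarm : Measurable fun ω => Z (Nsel ω) ω := by
    have : (fun ω => Z (Nsel ω) ω)
        = (fun x : Ω × ℕ => Z x.2 x.1) ∘ fun ω => (ω, Nsel ω) := rfl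
    rw [this]
    exact (measurable_from_prod_countable_left fun n => hZm n).comp
      (measurable_id.prodMk hNm)
  -- range of Nsel
  have hrange : ∀ ω, 1 ≤ Nsel ω ∧ Nsel ω ≤ N := by
    intro ω
    by_cases hex : ∃ k, 1 ≤ k ∧ k ≤ N - 1 ∧ U k ω ≤ wmin * (q (Z k ω) / p (Z k ω))
    · obtain ⟨h1, h2, -⟩ := (hNsel ω).1 hex
      exact ⟨h1, by omega⟩
    · rw [(hNsel ω).2 hex]; exact ⟨hN, le_rfl⟩
  -- main computation
  have hmain : ∀ S : Set α, MeasurableSet S →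
      ℙ ((fun ω => Z (Nsel ω) ω) ⁻¹' S) =
        ENNReal.ofReal (1 - wmin) ^ (N - 1) * νp S
          + ENNReal.ofReal (1 - (1 - wmin) ^ (N - 1)) * νq S := by
    intro S hS
    have hdecomp : (fun ω => Z (Nsel ω) ω) ⁻¹' S
        = ⋃ n ∈ Finset.Icc 1 N, (Nsel ⁻¹' {n} ∩ Z n ⁻¹' S) := by
      ext ω
      simp only [Set.mem_preimage, Set.mem_iUnion, Finset.mem_Icc, Set.mem_inter_iff,
        Set.mem_singleton_iff, exists_prop]
      constructor
      · intro h
        exact ⟨Nsel ω, hrange ω, rfl, h⟩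
      · rintro ⟨n, -, rfl, h⟩
        exact h
    rw [hdecomp, measure_biUnion_finset ?hdisj ?hmeas]
    case hdisj =>
      intro a _ b _ hab
      apply Set.disjoint_left.mpr
      rintro ω ⟨h1, -⟩ ⟨h2, -⟩
      exact hab (h1.symm.trans h2)
    case hmeas =>
      intro n _
      exact (hNm (measurableSet_singleton n)).inter ((hZm n) hS)
    rw [hinsert N hN, Finset.sum_insert (hnotmem N hN), hprod2 S hS,
      Finset.sum_congr rfl (fun n hn => hprod1 n (hlt1 _ _ hn).1
        (by have := hlt1 _ _ hn; omega) S hS)]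
    congr 1
    -- geometric sum
    rw [sum_Icc_one]
    simp only [Nat.add_sub_cancel]
    simp_rw [← mul_assoc]
    rw [← Finset.sum_mul]
    congr 1
    have hterm : ∀ k : ℕ, ENNReal.ofReal (1 - wmin) ^ k * ENNReal.ofReal wmin
        = ENNReal.ofReal ((1 - wmin) ^ k * wmin) := by
      intro k
      rw [ENNReal.ofReal_mul (pow_nonneg hb0 _), ENNReal.ofReal_pow hb0]
    simp_rw [hterm]
    rw [← ENNReal.ofReal_sum_of_nonneg
      (fun k _ => mul_nonneg (pow_nonneg hb0 _) hw.le), geom_aux]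
  -- the combined density applied to sets
  have hcomb : ∀ S : Set α, MeasurableSet S →
      (μ.withDensity fun z => ENNReal.ofReal
        ((1 - wmin) ^ (N - 1) * p z + (1 - (1 - wmin) ^ (N - 1)) * q z)) S
      = ENNReal.ofReal ((1 - wmin) ^ (N - 1)) * νp S
        + ENNReal.ofReal (1 - (1 - wmin) ^ (N - 1)) * νq S := by
    intro S hS
    rw [withDensity_apply _ hS]
    have hptw : ∀ z, ENNReal.ofReal ((1 - wmin) ^ (N - 1) * p z
          + (1 - (1 - wmin) ^ (N - 1)) * q z)
        = ENNReal.ofReal ((1 - wmin) ^ (N - 1)) * ENNReal.ofReal (p z)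
          + ENNReal.ofReal (1 - (1 - wmin) ^ (N - 1)) * ENNReal.ofReal (q z) := by
      intro z
      rw [ENNReal.ofReal_add (mul_nonneg hβ0 (hp0 z)) (mul_nonneg hβ1' (hq0 z)),
        ENNReal.ofReal_mul hβ0, ENNReal.ofReal_mul hβ1']
    simp_rw [hptw]
    rw [lintegral_add_left (show Measurable fun z =>
          ENNReal.ofReal ((1 - wmin) ^ (N - 1)) * ENNReal.ofReal (p z) from
          measurable_const.mul hpm.ennreal_ofReal),
      lintegral_const_mul _ hpm.ennreal_ofReal, lintegral_const_mul _ hqm.ennreal_ofReal,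
      ← withDensity_apply _ hS, ← withDensity_apply _ hS, ← hνp, ← hνq]
  have hβfold : ENNReal.ofReal ((1 - wmin) ^ (N - 1))
      = ENNReal.ofReal (1 - wmin) ^ (N - 1) := ENNReal.ofReal_pow hb0 _
  -- first conclusion
  have hout : Measure.map (fun ω => Z (Nsel ω) ω) ℙ =
      μ.withDensity fun z => ENNReal.ofReal
        ((1 - wmin) ^ (N - 1) * p z + (1 - (1 - wmin) ^ (N - 1)) * q z) := by
    ext S hS
    rw [Measure.map_apply hZstarm hS, hmain S hS, hcomb S hS, hβfold]
  refine ⟨hout, ?_⟩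
  -- TV part
  rw [hout]
  have hfp : ∀ S : Set α, νp S ≠ ⊤ := by
    intro S
    have h : νp S ≤ 1 := hp1 ▸ measure_mono (Set.subset_univ S)
    exact ne_top_of_le_ne_top ENNReal.one_ne_top h
  have hfq : ∀ S : Set α, νq S ≠ ⊤ := by
    intro S
    have h : νq S ≤ 1 := hq1 ▸ measure_mono (Set.subset_univ S)
    exact ne_top_of_le_ne_top ENNReal.one_ne_top h
  unfold tvDist
  rw [Real.mul_iSup_of_nonneg hβ0]
  congr 1
  funext s
  obtain ⟨S, hS⟩ := s
  simp only
  rw [hcomb S hS, ENNReal.toReal_add (ENNReal.mul_ne_top ENNReal.ofReal_ne_top (hfp S))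
      (ENNReal.mul_ne_top ENNReal.ofReal_ne_top (hfq S)),
    ENNReal.toReal_mul, ENNReal.toReal_mul, ENNReal.toReal_ofReal hβ0,
    ENNReal.toReal_ofReal hβ1']
  have hr : (1 - wmin) ^ (N - 1) * (νp S).toReal
      + (1 - (1 - wmin) ^ (N - 1)) * (νq S).toReal - (νq S).toReal
      = (1 - wmin) ^ (N - 1) * ((νp S).toReal - (νq S).toReal) := by ring
  rw [hr, abs_mul, abs_of_nonneg hβ0]
end

section
/- Let p and q be probability densities with q(z)/p(z) ≤ 2^B for all z, for some B > 0, and let Z have density q. Then for every t with t/2 ≥ e^{−1} log₂ e, P( log₂(q(Z)/p(Z)) > D_KL(q‖p) + t/2 ) ≤ exp( −(t/2 − e^{−1} log₂ e)² / B² ). -/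
open MeasureTheory

/-- `exp x ≤ 1 + 4x` on `[0,1]`, by convexity of `exp`. -/
lemma exp_le_one_add_four_mul {x : ℝ} (h0 : 0 ≤ x) (h1 : x ≤ 1) :
    Real.exp x ≤ 1 + 4 * x := by
  have h := convexOn_exp.2 (Set.mem_univ (0:ℝ)) (Set.mem_univ (1:ℝ))
    (by linarith : (0:ℝ) ≤ 1 - x) h0 (by ring)
  simp only [smul_eq_mul, mul_zero, mul_one, zero_add, Real.exp_zero] at h
  have he : Real.exp 1 < 2.7182818286 := Real.exp_one_lt_d9
  nlinarith

/-- Cantelli-type tail bound for a bounded nonneg random variable. -/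
lemma cantelli_tail {α : Type*} [MeasurableSpace α] (ν : Measure α)
    [IsProbabilityMeasure ν] (X : α → ℝ) (hX : Measurable X)
    (B : ℝ) (hB : 0 < B) (h0 : ∀ z, 0 ≤ X z) (h1 : ∀ z, X z ≤ B)
    (s : ℝ) (hs : 0 ≤ s) :
    (ν {z | (∫ x, X x ∂ν) + s ≤ X z}).toReal ≤ Real.exp (-s ^ 2 / B ^ 2) := by
  set m := ∫ x, X x ∂ν with hm
  have hXi : Integrable X ν := by
    refine Integrable.mono' (integrable_const B) hX.aestronglyMeasurable ?_
    filter_upwards with z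
    rw [Real.norm_eq_abs, abs_of_nonneg (h0 z)]; exact h1 z
  have hm0 : 0 ≤ m := integral_nonneg h0
  rcases eq_or_lt_of_le hs with rfl | hs'
  · -- s = 0 : trivial bound by 1
    simp only [neg_zero, zero_pow, ne_eq, OfNat.ofNat_ne_zero, not_false_eq_true,
      zero_div, Real.exp_zero]
    calc (ν _).toReal ≤ (ν Set.univ).toReal := by
          gcongr
          · exact measure_ne_top _ _
          · exact Set.subset_univ _
      _ = 1 := by simp
  rcases le_or_gt s B with hsB | hsB
  swap
  · -- s > B : event is empty
    have : {z | m + s ≤ X z} = ∅ := by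
      ext z; simp only [Set.mem_setOf_eq, Set.mem_empty_iff_false, iff_false, not_le]
      have := h1 z; linarith
    rw [this]; simp [Real.exp_pos, (Real.exp_pos _).le]
  -- main case 0 < s ≤ B
  have hXi2 : Integrable (fun z => (X z - m) ^ 2) ν := by
    refine Integrable.mono' (integrable_const ((B + m) ^ 2)) ?_ ?_
    · exact ((hX.sub measurable_const).pow_const 2).aestronglyMeasurable
    · filter_upwards with z
      rw [Real.norm_eq_abs, abs_of_nonneg (sq_nonneg _)]
      have := h0 z; have := h1 z
      nlinarith
  set V := ∫ x, (X x - m) ^ 2 ∂ν with hV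
  have hV0 : 0 ≤ V := integral_nonneg fun z => sq_nonneg _
  -- variance bound V ≤ B^2/4
  have hVle : V ≤ B ^ 2 / 4 := by
    have hpt : ∀ z, (X z - m) ^ 2 ≤ (B - 2 * m) * X z + m ^ 2 := by
      intro z; have := h0 z; have := h1 z; nlinarith
    have hint : Integrable (fun z => (B - 2 * m) * X z + m ^ 2) ν :=
      ((hXi.const_mul (B - 2 * m)).add (integrable_const _))
    have := integral_mono hXi2 hint hpt
    rw [integral_add (hXi.const_mul (B - 2 * m)) (integrable_const _),
      integral_const_mul, integral_const] at this
    simp only [measure_univ, probReal_univ, ENNReal.toReal_one, smul_eq_mul, one_mul] at this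
    rw [← hm, ← hV] at this
    nlinarith [sq_nonneg (B - 2 * m)]
  set u := V / s with hu
  have hu0 : 0 ≤ u := div_nonneg hV0 hs'.le
  have hsu : 0 < s + u := by linarith
  -- Markov on (X - m + u)^2
  have hYi : Integrable (fun z => (X z - m + u) ^ 2) ν := by
    refine Integrable.mono' (integrable_const ((B + m + u) ^ 2)) ?_ ?_
    · exact (((hX.sub measurable_const).add_const u).pow_const 2).aestronglyMeasurable
    · filter_upwards with z
      rw [Real.norm_eq_abs, abs_of_nonneg (sq_nonneg _)]
      have := h0 z; have := h1 z
      nlinarith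
  have hmarkov := mul_meas_ge_le_integral_of_nonneg
    (Filter.Eventually.of_forall fun z => sq_nonneg (X z - m + u)) hYi ((s + u) ^ 2)
  -- ∫ (X - m + u)^2 = V + u^2
  have hEexp : ∫ z, (X z - m + u) ^ 2 ∂ν = V + u ^ 2 := by
    have : (fun z => (X z - m + u) ^ 2)
        = fun z => (X z - m) ^ 2 + (2 * u * X z + (u ^ 2 - 2 * u * m)) := by
      funext z; ring
    have hg : Integrable (fun z => 2 * u * X z + (u ^ 2 - 2 * u * m)) ν :=
      (hXi.const_mul (2 * u)).add (integrable_const _)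
    rw [this, integral_add hXi2 hg,
      integral_add (hXi.const_mul (2*u)) (integrable_const _), integral_const_mul,
      integral_const]
    simp only [measure_univ, probReal_univ, ENNReal.toReal_one, smul_eq_mul, one_mul, ← hm]
    ring
  rw [hEexp] at hmarkov
  -- event inclusion
  have hsub : {z | m + s ≤ X z} ⊆ {z | (s + u) ^ 2 ≤ (X z - m + u) ^ 2} := by
    intro z hz
    simp only [Set.mem_setOf_eq] at hz ⊢
    have : s + u ≤ X z - m + u := by linarith
    nlinarith
  have hmono : (ν {z | m + s ≤ X z}).toReal
      ≤ (ν {z | (s + u) ^ 2 ≤ (X z - m + u) ^ 2}).toReal :=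
    ENNReal.toReal_mono (measure_ne_top _ _) (measure_mono hsub)
  have key : (ν {z | m + s ≤ X z}).toReal ≤ (V + u ^ 2) / (s + u) ^ 2 := by
    rw [le_div_iff₀ (by positivity)]
    calc (ν {z | m + s ≤ X z}).toReal * (s + u) ^ 2
        ≤ (ν {z | (s + u) ^ 2 ≤ (X z - m + u) ^ 2}).toReal * (s + u) ^ 2 := by
          gcongr
      _ ≤ V + u ^ 2 := by rw [mul_comm]; exact hmarkov
  refine key.trans ?_
  -- (V + u^2)/(s+u)^2 = V/(V+s^2)
  have halg : (V + u ^ 2) / (s + u) ^ 2 ≤ V / (V + s ^ 2) := by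
    rcases eq_or_lt_of_le hV0 with h | h
    · rw [hu, ← h]
      simp [hs'.ne']
    · have hVs : 0 < V + s ^ 2 := by positivity
      rw [div_le_div_iff₀ (by positivity) hVs]
      rw [hu]
      have h1 : (V + (V/s)^2) * (V + s^2) = V * (s + V/s)^2 := by
        field_simp; ring
      linarith [h1.le, h1.ge]
  refine halg.trans ?_
  -- V/(V+s²) ≤ (B²/4)/(B²/4+s²) ≤ exp(-s²/B²)
  have h2 : V / (V + s ^ 2) ≤ (B ^ 2 / 4) / (B ^ 2 / 4 + s ^ 2) := by
    rw [div_le_div_iff₀ (by positivity) (by positivity)]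
    nlinarith
  refine h2.trans ?_
  have hx0 : 0 ≤ s ^ 2 / B ^ 2 := by positivity
  have hx1 : s ^ 2 / B ^ 2 ≤ 1 := by
    rw [div_le_one (by positivity)]; nlinarith
  have hexp := exp_le_one_add_four_mul hx0 hx1
  have hratio : Real.exp (s ^ 2 / B ^ 2) ≤ (B ^ 2 / 4 + s ^ 2) / (B ^ 2 / 4) := by
    refine hexp.trans ?_
    rw [le_div_iff₀ (by positivity)]
    field_simp
    ring_nf
    nlinarith [sq_nonneg s, sq_nonneg B]
  have heq : B ^ 2 / 4 / (B ^ 2 / 4 + s ^ 2) = ((B ^ 2 / 4 + s ^ 2) / (B ^ 2 / 4))⁻¹ := by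
    rw [inv_div]
  rw [neg_div, Real.exp_neg, heq]
  exact inv_anti₀ (Real.exp_pos _) hratio

lemma mul_log_ratio_le {p q : ℝ} (hp : 0 < p) (hq : 0 < q) :
    q * Real.log (p / q) ≤ p / Real.exp 1 := by
  have hx : 0 < p / (q * Real.exp 1) := by positivity
  have h2 := Real.log_le_sub_one_of_pos hx
  have hrw : Real.log (p / (q * Real.exp 1)) = Real.log (p / q) - 1 := by
    rw [Real.log_div hp.ne' (by positivity), Real.log_mul hq.ne' (Real.exp_pos 1).ne',
      Real.log_exp, Real.log_div hp.ne' hq.ne']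
    ring
  rw [hrw] at h2
  have : Real.log (p / q) ≤ p / (q * Real.exp 1) := by linarith
  have h3 := mul_le_mul_of_nonneg_left this hq.le
  calc q * Real.log (p / q) ≤ q * (p / (q * Real.exp 1)) := h3
    _ = p / Real.exp 1 := by field_simp

/-- Hoeffding-type tail bound for the log density ratio.  If
`q(z)/p(z) ≤ 2^B` for all `z` (with `B > 0`) and `Z ∼ q`, then for every `t` with
`t/2 ≥ e⁻¹ log₂ e`,
`P(log₂(q(Z)/p(Z)) > D_KL(q‖p) + t/2) ≤ exp(-(t/2 - e⁻¹ log₂ e)² / B²)`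
(KL divergence in bits). -/
theorem log_ratio_tail_bound {α : Type*} [MeasurableSpace α]
    (μ : Measure α) [SigmaFinite μ]
    (p q : α → ℝ) (hpm : Measurable p) (hqm : Measurable q)
    (hp0 : ∀ z, 0 ≤ p z) (hq0 : ∀ z, 0 ≤ q z)
    (hpi : Integrable p μ) (hqi : Integrable q μ)
    (hp1 : ∫ z, p z ∂μ = 1) (hq1 : ∫ z, q z ∂μ = 1)
    (hac : ∀ᵐ z ∂μ, p z = 0 → q z = 0)
    (B : ℝ) (hB : 0 < B) (hbound : ∀ z, q z ≤ 2 ^ B * p z)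
    (t : ℝ) (ht : (Real.exp 1)⁻¹ * Real.logb 2 (Real.exp 1) ≤ t / 2) :
    ((μ.withDensity fun z => ENNReal.ofReal (q z))
        {z | (∫ z', q z' * Real.logb 2 (q z' / p z') ∂μ) + t / 2 <
          Real.logb 2 (q z / p z)}).toReal ≤
      Real.exp (-(t / 2 - (Real.exp 1)⁻¹ * Real.logb 2 (Real.exp 1)) ^ 2 / B ^ 2) := by
  set c : ℝ := (Real.exp 1)⁻¹ * Real.logb 2 (Real.exp 1) with hc
  set ν : Measure α := μ.withDensity fun z => ENNReal.ofReal (q z) with hν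
  set L : α → ℝ := fun z => Real.logb 2 (q z / p z) with hL
  set X : α → ℝ := fun z => max 0 (L z) with hX
  set N : α → ℝ := fun z => max 0 (-(q z * L z)) with hN
  set D : ℝ := ∫ z', q z' * L z' ∂μ with hD
  have hl2 : (0:ℝ) < Real.log 2 := Real.log_pos (by norm_num)
  have hc0 : 0 ≤ c := by
    rw [hc, ← Real.log_div_log, Real.log_exp]
    positivity
  -- ν is a probability measure
  haveI hprob : IsProbabilityMeasure ν := by
    constructor
    rw [hν, withDensity_apply _ MeasurableSet.univ, Measure.restrict_univ,
      ← ofReal_integral_eq_lintegral_ofReal hqi (Filter.Eventually.of_forall hq0), hq1]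
    simp
  -- measurability
  have hLm : Measurable L := by
    have : L = fun z => Real.log (q z / p z) / Real.log 2 := by
      funext z; simp only [hL, ← Real.log_div_log]
    rw [this]
    exact (Real.measurable_log.comp (hqm.div hpm)).div_const _
  have hXm : Measurable X := measurable_const.max hLm
  have hX0 : ∀ z, 0 ≤ X z := fun z => le_max_left _ _
  -- X is bounded by B
  have hXB : ∀ z, X z ≤ B := by
    intro z
    refine max_le hB.le ?_
    rcases (div_nonneg (hq0 z) (hp0 z)).eq_or_lt with h | h
    · simp only [hL]; rw [← h, Real.logb_zero]; exact hB.le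
    · have hpz : 0 < p z := by
        rcases (hp0 z).eq_or_lt with h' | h'
        · exfalso; rw [← h', div_zero] at h; exact lt_irrefl _ h
        · exact h'
      have hle : q z / p z ≤ 2 ^ B := by
        rw [div_le_iff₀ hpz]; exact hbound z
      calc L z ≤ Real.logb 2 ((2:ℝ) ^ B) :=
          Real.logb_le_logb_of_le (by norm_num) h hle
        _ = B := Real.logb_rpow (by norm_num) (by norm_num)
  -- E_ν[X] = ∫ q * X dμ
  have hEX : ∫ z, X z ∂ν = ∫ z, q z * X z ∂μ := by
    have hdq : (fun z => ENNReal.ofReal (q z))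
        = fun z => ((q z).toNNReal : ENNReal) := by funext z; rfl
    rw [hν, hdq, integral_withDensity_eq_integral_smul hqm.real_toNNReal]
    refine integral_congr_ae (Filter.Eventually.of_forall fun z => ?_)
    simp [NNReal.smul_def, Real.coe_toNNReal _ (hq0 z)]
  -- pointwise decomposition q*X = q*L + N
  have hdec : ∀ z, q z * X z = q z * L z + N z := by
    intro z
    rcases le_total (L z) 0 with h | h
    · rw [hX, hN]
      simp only [max_eq_left h]
      rw [max_eq_right (by nlinarith [hq0 z] : (0:ℝ) ≤ -(q z * L z))]
      ring
    · rw [hX, hN]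
      simp only [max_eq_right h]
      rw [max_eq_left (by nlinarith [hq0 z] : -(q z * L z) ≤ 0)]
      ring
  -- N ≤ c * p a.e.
  have hNle : ∀ᵐ z ∂μ, N z ≤ c * p z := by
    filter_upwards [hac] with z hz
    rcases (hq0 z).eq_or_lt with h | h
    · rw [hN]; simp only [← h, zero_mul, neg_zero, max_self]
      exact mul_nonneg hc0 (hp0 z)
    · have hpz : 0 < p z := by
        rcases (hp0 z).eq_or_lt with h' | h'
        · exact absurd (hz h'.symm).symm h.ne
        · exact h'
      refine max_le (mul_nonneg hc0 (hp0 z)) ?_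
      have key := mul_log_ratio_le hpz h
      have hrw : -(q z * L z) = q z * Real.log (p z / q z) / Real.log 2 := by
        simp only [hL, ← Real.log_div_log]
        rw [Real.log_div (h.ne') hpz.ne', Real.log_div hpz.ne' h.ne']
        field_simp
        ring
      rw [hrw, hc, ← Real.log_div_log, Real.log_exp]
      rw [div_le_iff₀ hl2]
      calc q z * Real.log (p z / q z) ≤ p z / Real.exp 1 := key
        _ = (Real.exp 1)⁻¹ * (1 / Real.log 2) * p z * Real.log 2 := by
          field_simp
  -- integrability
  have hIqX : Integrable (fun z => q z * X z) μ := by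
    refine Integrable.mono' (hqi.const_mul B) (hqm.mul hXm).aestronglyMeasurable ?_
    filter_upwards with z
    rw [Real.norm_eq_abs, abs_of_nonneg (mul_nonneg (hq0 z) (hX0 z))]
    exact mul_le_mul_of_nonneg_left (hXB z) (hq0 z) |>.trans_eq (mul_comm _ _)
  have hINm : Measurable N := measurable_const.max (hqm.mul hLm).neg
  have hIN : Integrable N μ := by
    refine Integrable.mono' (hpi.const_mul c) hINm.aestronglyMeasurable ?_
    filter_upwards [hNle] with z hz
    rw [Real.norm_eq_abs, abs_of_nonneg (le_max_left _ _)]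
    exact hz
  have hIqL : Integrable (fun z => q z * L z) μ := by
    have : (fun z => q z * L z) = fun z => q z * X z - N z := by
      funext z; rw [hdec z]; ring
    rw [this]; exact hIqX.sub hIN
  -- E_ν[X] ≤ D + c
  have hEle : ∫ z, X z ∂ν ≤ D + c := by
    rw [hEX]
    have h1 : ∫ z, q z * X z ∂μ = D + ∫ z, N z ∂μ := by
      rw [hD]
      have hfe : (fun z => q z * X z) = fun z => q z * L z + N z := funext hdec
      rw [hfe]
      exact integral_add hIqL hIN
    rw [h1]
    have h2 : ∫ z, N z ∂μ ≤ ∫ z, c * p z ∂μ :=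
      integral_mono_ae hIN (hpi.const_mul c) hNle
    rw [integral_const_mul, hp1, mul_one] at h2
    linarith
  -- conclude via Cantelli
  have hs : 0 ≤ t / 2 - c := by linarith
  have hsub : {z | D + t / 2 < L z} ⊆ {z | (∫ x, X x ∂ν) + (t / 2 - c) ≤ X z} := by
    intro z hz
    simp only [Set.mem_setOf_eq] at hz ⊢
    have h1 : L z ≤ X z := le_max_right _ _
    linarith
  have hfinal := cantelli_tail ν X hXm B hB hX0 hXB (t / 2 - c) hs
  exact (ENNReal.toReal_mono (measure_ne_top _ _) (measure_mono hsub)).trans hfinal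
end

section
/- Let p and q be probability densities with q absolutely continuous with respect to p, and let Z have density q. Then E[ −min(0, log₂(q(Z)/p(Z))) ] ≤ e^{−1} log₂ e, and consequently E[ max(0, log₂(q(Z)/p(Z))) ] ≤ D_KL(q‖p) + e^{−1} log₂ e. -/
open MeasureTheory

lemma log_le_div_e {x : ℝ} (hx : 0 < x) : Real.log x ≤ x / Real.exp 1 := by
  have h := Real.log_le_sub_one_of_pos (show 0 < x / Real.exp 1 from div_pos hx (Real.exp_pos 1))
  rw [Real.log_div hx.ne' (Real.exp_pos 1).ne', Real.log_exp] at h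
  linarith

lemma pt_bound {P Q : ℝ} (hP : 0 < P) (hQ : 0 ≤ Q) :
    Q * (-min 0 (Real.logb 2 (Q / P))) ≤ P * ((Real.exp 1)⁻¹ * Real.logb 2 (Real.exp 1)) := by
  have hc : 0 ≤ (Real.exp 1)⁻¹ * Real.logb 2 (Real.exp 1) := by
    apply mul_nonneg (by positivity)
    apply Real.logb_nonneg one_lt_two (by nlinarith [Real.add_one_le_exp (1:ℝ)])
  have hlogb_e : Real.logb 2 (Real.exp 1) = 1 / Real.log 2 := by
    rw [Real.logb, Real.log_exp]
  rcases le_or_gt (Real.logb 2 (Q / P)) 0 with hu | hu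
  · rw [min_eq_right hu]
    rcases eq_or_lt_of_le hQ with h0 | hQ'
    · rw [← h0]; simpa using mul_nonneg hP.le hc
    · have hQP : 0 < Q / P := div_pos hQ' hP
      have hlog : -Real.log (Q / P) ≤ (P / Q) / Real.exp 1 := by
        have h := log_le_div_e (show (0:ℝ) < P / Q from div_pos hP hQ')
        rw [← Real.log_inv, show (Q / P)⁻¹ = P / Q by field_simp]
        exact h
      have hlog2 : 0 < Real.log 2 := Real.log_pos one_lt_two
      rw [Real.logb, hlogb_e]
      have hkey : Q * (P / Q / Real.exp 1) = P * (Real.exp 1)⁻¹ := by field_simp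
      calc Q * -(Real.log (Q / P) / Real.log 2)
          = Q * (-Real.log (Q / P)) / Real.log 2 := by ring
        _ ≤ Q * (P / Q / Real.exp 1) / Real.log 2 := by
            gcongr
        _ = P * ((Real.exp 1)⁻¹ * (1 / Real.log 2)) := by rw [hkey]; ring
  · rw [min_eq_left hu.le]
    simpa using mul_nonneg hP.le hc

/-- For densities `q ≪ p` and `Z ∼ q`,
`E[-min(0, log₂(q(Z)/p(Z)))] ≤ e⁻¹ log₂ e`, and consequently
`E[max(0, log₂(q(Z)/p(Z)))] ≤ D_KL(q‖p) + e⁻¹ log₂ e` (KL divergence in bits). -/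
theorem expected_positive_part_log_ratio_le {α : Type*} [MeasurableSpace α]
    (μ : Measure α) [SigmaFinite μ]
    (p q : α → ℝ) (hpm : Measurable p) (hqm : Measurable q)
    (hp0 : ∀ z, 0 ≤ p z) (hq0 : ∀ z, 0 ≤ q z)
    (hpi : Integrable p μ) (hqi : Integrable q μ)
    (hp1 : ∫ z, p z ∂μ = 1) (hq1 : ∫ z, q z ∂μ = 1)
    (hac : ∀ᵐ z ∂μ, p z = 0 → q z = 0)
    (hKL : Integrable (fun z => q z * Real.logb 2 (q z / p z)) μ) :
    (∫ z, q z * (-min 0 (Real.logb 2 (q z / p z))) ∂μ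
        ≤ (Real.exp 1)⁻¹ * Real.logb 2 (Real.exp 1)) ∧
    (∫ z, q z * max 0 (Real.logb 2 (q z / p z)) ∂μ
        ≤ (∫ z, q z * Real.logb 2 (q z / p z) ∂μ)
          + (Real.exp 1)⁻¹ * Real.logb 2 (Real.exp 1)) := by
  set c : ℝ := (Real.exp 1)⁻¹ * Real.logb 2 (Real.exp 1) with hc_def
  set f : α → ℝ := fun z => q z * (-min 0 (Real.logb 2 (q z / p z))) with hf_def
  have hf_nonneg : ∀ z, 0 ≤ f z := fun z =>
    mul_nonneg (hq0 z) (by simp [neg_nonneg])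
  have hbound : ∀ᵐ z ∂μ, f z ≤ p z * c := by
    filter_upwards [hac] with z hz
    rcases eq_or_lt_of_le (hp0 z) with h0 | hP
    · have hq : q z = 0 := hz h0.symm
      simp [hf_def, hq, ← h0]
    · exact pt_bound hP (hq0 z)
  have hfm : Measurable f := by
    apply hqm.mul
    apply Measurable.neg
    apply measurable_const.min
    simp only [Real.logb]
    exact ((hqm.div hpm).log).div_const _
  have hpc : Integrable (fun z => p z * c) μ := hpi.mul_const c
  have hfi : Integrable f μ := by
    apply Integrable.mono' hpc hfm.aestronglyMeasurable
    filter_upwards [hbound] with z hz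
    rwa [Real.norm_eq_abs, abs_of_nonneg (hf_nonneg z)]
  have h1 : ∫ z, f z ∂μ ≤ c := by
    calc ∫ z, f z ∂μ ≤ ∫ z, p z * c ∂μ := integral_mono_ae hfi hpc hbound
      _ = c := by rw [integral_mul_const, hp1, one_mul]
  refine ⟨h1, ?_⟩
  have hmax : ∀ z, q z * max 0 (Real.logb 2 (q z / p z))
      = q z * Real.logb 2 (q z / p z) + f z := by
    intro z
    simp only [hf_def]
    set u := Real.logb 2 (q z / p z) with hu
    have h : max 0 u = u + -(min 0 u) := by
      have := max_add_min (0:ℝ) u; linarith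
    rw [h, mul_add]
  calc ∫ z, q z * max 0 (Real.logb 2 (q z / p z)) ∂μ
      = ∫ z, (q z * Real.logb 2 (q z / p z) + f z) ∂μ :=
        integral_congr_ae (Filter.Eventually.of_forall hmax)
    _ = (∫ z, q z * Real.logb 2 (q z / p z) ∂μ) + ∫ z, f z ∂μ :=
        integral_add hKL hfi
    _ ≤ _ := by linarith
end
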